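/- arXiv:1607.02575 — 7 statements merged into one kernel-verified Lean document; each statement's English description precedes it below -/
import Mathlib

section
/- If λ is an extreme point of the set of left-invariant means on a countable amenable group G, then for all φ, ψ ∈ ℓ∞(G) and every left-invariant mean η on G, one has ∫_G λ((g·φ)·ψ) dη(g) = λ(φ)·λ(ψ), where (g·φ)(t) = φ(g⁻¹t). -/
open scoped Classical BoundedContinuousFunction

/-- Left translation `t ↦ g⁻¹ * t` as a continuous map (G discrete). -/
def lTransMap (G : Type*) [Group G] [TopologicalSpace G] [DiscreteTopology G] (g : G) :
    C(G, G) := ⟨fun t => g⁻¹ * t, continuous_of_discreteTopology⟩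

/-- The left translation action on ℓ∞(G): `(g · φ)(t) = φ(g⁻¹ t)`. -/
noncomputable def lTrans (G : Type*) [Group G] [TopologicalSpace G] [DiscreteTopology G]
    (g : G) (f : G →ᵇ ℝ) : G →ᵇ ℝ := f.compContinuous (lTransMap G g)

/-- A mean on G: a positive unital linear functional on ℓ∞(G). -/
def IsMean (G : Type*) [Group G] [TopologicalSpace G] [DiscreteTopology G]
    (m : (G →ᵇ ℝ) →ₗ[ℝ] ℝ) : Prop :=
  m 1 = 1 ∧ ∀ f : G →ᵇ ℝ, 0 ≤ f → 0 ≤ m f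

/-- A left-invariant mean on G. -/
def IsLeftInvariantMean (G : Type*) [Group G] [TopologicalSpace G] [DiscreteTopology G]
    (m : (G →ᵇ ℝ) →ₗ[ℝ] ℝ) : Prop :=
  IsMean G m ∧ ∀ (g : G) (f : G →ᵇ ℝ), m (lTrans G g f) = m f

/-!
For `0 ≤ φ ≤ 1`, the functionals `ψ ↦ ∫ lam((g·φ)·ψ) dη(g)` and `ψ ↦ ∫ lam((g·(1 - φ))·ψ) dη(g)`
are positive and left-invariant (by the invariance of `lam` and `η`), have total masses `lam φ`
and `1 - lam φ`, and add up to `lam`. So they are `lam φ` and `1 - lam φ` times left-invariant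
means, and extremality of `lam` forces the first one to be `lam φ • lam`. Both sides of the
identity are linear in `φ`, and the functions with values in `[0, 1]` span `ℓ∞(G)`.
-/

theorem smul_eq_smul_of_mem_extremePoints {𝕜 E : Type*} [Semiring 𝕜] [PartialOrder 𝕜]
    [AddCommMonoid E] [Module 𝕜 E] {C : Set E} {x y z : E} (hx : x ∈ C.extremePoints 𝕜)
    (hy : y ∈ C) (hz : z ∈ C) {a b : 𝕜} (ha : 0 ≤ a) (hb : 0 ≤ b) (hab : a + b = 1)
    (h : a • y + b • z = x) : a • y = a • x := by
  rcases ha.eq_or_lt with rfl | ha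
  · simp
  rcases hb.eq_or_lt with rfl | hb
  · rw [add_zero] at hab
    subst hab
    simpa using h
  · rw [hx.2 hy hz ⟨a, b, ha, hb, hab, h⟩]

namespace BoundedContinuousFunction

variable {α : Type*} [TopologicalSpace α]

theorem le_def {β : Type*} [NormedAddCommGroup β] [Lattice β] [HasSolidNorm β]
    [IsOrderedAddMonoid β] {f g : α →ᵇ β} : f ≤ g ↔ ∀ x, f x ≤ g x :=
  Iff.rfl

theorem abs_apply_le_norm_mul_apply_one {m : (α →ᵇ ℝ) →ₗ[ℝ] ℝ}
    (hm : ∀ f, 0 ≤ f → 0 ≤ m f) (f : α →ᵇ ℝ) : |m f| ≤ ‖f‖ * m 1 := by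
  have mono {f g : α →ᵇ ℝ} (hfg : f ≤ g) : m f ≤ m g := by
    simpa using hm (g - f) (sub_nonneg.2 hfg)
  have hf (x : α) : |f x| ≤ ‖f‖ := by simpa using f.norm_coe_le_norm x
  rw [abs_le]
  constructor
  · simpa using mono (f := -(‖f‖ • 1)) (le_def.2 fun x => by simpa using (abs_le.1 (hf x)).1)
  · simpa using mono (g := ‖f‖ • 1) (le_def.2 fun x => by simpa using (abs_le.1 (hf x)).2)

theorem eq_zero_of_apply_one_eq_zero {m : (α →ᵇ ℝ) →ₗ[ℝ] ℝ}
    (hm : ∀ f, 0 ≤ f → 0 ≤ m f) (h1 : m 1 = 0) : m = 0 :=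
  LinearMap.ext fun f => abs_nonpos_iff.1 <| by
    simpa [h1] using abs_apply_le_norm_mul_apply_one hm f

theorem linearMap_ext_of_nonneg_of_le_one {M : Type*} [AddCommGroup M] [Module ℝ M]
    {T S : (α →ᵇ ℝ) →ₗ[ℝ] M} (h : ∀ φ, 0 ≤ φ → φ ≤ 1 → T φ = S φ) : T = S := by
  ext f
  have hf (x : α) : |f x| ≤ ‖f‖ := by simpa using f.norm_coe_le_norm x
  set c : ℝ := 2 * ‖f‖ + 1
  have hc : 0 < c := by positivity
  set φ : α →ᵇ ℝ := c⁻¹ • (f + ‖f‖ • 1)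
  have hφ0 : 0 ≤ φ := le_def.2 fun x => by
    have := (abs_le.1 (hf x)).1
    simp only [φ, coe_zero, Pi.zero_apply, coe_smul, coe_add, coe_one,
      Pi.add_apply, Pi.one_apply, smul_eq_mul, mul_one]
    exact mul_nonneg (inv_nonneg.2 hc.le) (by linarith)
  have hφ1 : φ ≤ 1 := le_def.2 fun x => by
    have := (abs_le.1 (hf x)).2
    simp only [φ, coe_smul, coe_add, coe_one, Pi.add_apply, Pi.one_apply,
      smul_eq_mul, mul_one]
    rw [inv_mul_le_iff₀ hc]
    linarith
  have hfφ : f = c • φ - ‖f‖ • 1 := by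
    rw [smul_smul, mul_inv_cancel₀ hc.ne', one_smul, add_sub_cancel_right]
  clear_value φ
  rw [hfφ, map_sub, map_smul, map_smul, map_sub, map_smul, map_smul, h φ hφ0 hφ1,
    h 1 (le_def.2 fun _ => zero_le_one) le_rfl]

end BoundedContinuousFunction

open BoundedContinuousFunction

section Means

variable {G : Type*} [Group G] [TopologicalSpace G] [DiscreteTopology G]

theorem IsMean.abs_apply_le {m : (G →ᵇ ℝ) →ₗ[ℝ] ℝ} (hm : IsMean G m) (f : G →ᵇ ℝ) :
    |m f| ≤ ‖f‖ := by
  simpa [hm.1] using abs_apply_le_norm_mul_apply_one hm.2 f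

theorem IsLeftInvariantMean.exists_isLeftInvariantMean_eq_smul {lam m : (G →ᵇ ℝ) →ₗ[ℝ] ℝ}
    (hlam : IsLeftInvariantMean G lam) (hpos : ∀ f, 0 ≤ f → 0 ≤ m f)
    (hinv : ∀ g f, m (lTrans G g f) = m f) :
    ∃ μ, IsLeftInvariantMean G μ ∧ m = m 1 • μ := by
  by_cases h1 : m 1 = 0
  · exact ⟨lam, hlam, by rw [h1, zero_smul]; exact eq_zero_of_apply_one_eq_zero hpos h1⟩
  · refine ⟨(m 1)⁻¹ • m, ⟨⟨by simp [h1], fun f hf => ?_⟩, fun g f => by simp [hinv]⟩, ?_⟩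
    · exact mul_nonneg (inv_nonneg.2 (hpos 1 (le_def.2 fun _ => zero_le_one))) (hpos f hf)
    · rw [smul_smul, mul_inv_cancel₀ h1, one_smul]

@[simp]
theorem lTrans_apply (g : G) (f : G →ᵇ ℝ) (t : G) : lTrans G g f t = f (g⁻¹ * t) :=
  rfl

@[simp]
theorem lTrans_add (g : G) (f h : G →ᵇ ℝ) : lTrans G g (f + h) = lTrans G g f + lTrans G g h := by
  ext; simp

@[simp]
theorem lTrans_smul (g : G) (c : ℝ) (f : G →ᵇ ℝ) : lTrans G g (c • f) = c • lTrans G g f := by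
  ext; simp

@[simp]
theorem lTrans_one (g : G) : lTrans G g (1 : G →ᵇ ℝ) = 1 := by
  ext; simp

@[simp]
theorem one_lTrans (f : G →ᵇ ℝ) : lTrans G 1 f = f := by
  ext; simp

theorem lTrans_mul (g : G) (f h : G →ᵇ ℝ) :
    lTrans G g (f * h) = lTrans G g f * lTrans G g h := by
  ext; simp

theorem lTrans_lTrans (g h : G) (f : G →ᵇ ℝ) :
    lTrans G g (lTrans G h f) = lTrans G (g * h) f := by
  ext; simp [mul_assoc]

theorem norm_lTrans_le (g : G) (f : G →ᵇ ℝ) : ‖lTrans G g f‖ ≤ ‖f‖ :=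
  norm_compContinuous_le f _

variable {lam eta : (G →ᵇ ℝ) →ₗ[ℝ] ℝ}

noncomputable def correlation (hlam : IsMean G lam) :
    (G →ᵇ ℝ) →ₗ[ℝ] (G →ᵇ ℝ) →ₗ[ℝ] (G →ᵇ ℝ) :=
  LinearMap.mk₂ ℝ
    (fun φ ψ => ofNormedAddCommGroupDiscrete (fun g => lam (lTrans G g φ * ψ)) (‖φ‖ * ‖ψ‖)
      fun g => calc
        ‖lam (lTrans G g φ * ψ)‖ ≤ ‖lTrans G g φ * ψ‖ := hlam.abs_apply_le _
        _ ≤ ‖lTrans G g φ‖ * ‖ψ‖ := norm_mul_le _ _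
        _ ≤ ‖φ‖ * ‖ψ‖ := by gcongr; exact norm_lTrans_le g φ)
    (fun φ₁ φ₂ ψ => by ext; simp [add_mul])
    (fun c φ ψ => by ext; simp [smul_mul_assoc])
    (fun φ ψ₁ ψ₂ => by ext; simp [mul_add])
    (fun c φ ψ => by ext; simp [mul_smul_comm])

@[simp]
theorem correlation_apply (hlam : IsMean G lam) (φ ψ : G →ᵇ ℝ) (g : G) :
    correlation hlam φ ψ g = lam (lTrans G g φ * ψ) :=
  rfl

theorem correlation_nonneg (hlam : IsMean G lam) {φ ψ : G →ᵇ ℝ} (hφ : 0 ≤ φ) (hψ : 0 ≤ ψ) :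
    0 ≤ correlation hlam φ ψ :=
  le_def.2 fun g => hlam.2 _ <| le_def.2 fun t =>
    mul_nonneg (le_def.1 hφ (g⁻¹ * t)) (le_def.1 hψ t)

theorem correlation_one_left (hlam : IsMean G lam) (ψ : G →ᵇ ℝ) :
    correlation hlam 1 ψ = lam ψ • 1 := by
  ext; simp

theorem correlation_one_right (hlam : IsLeftInvariantMean G lam) (φ : G →ᵇ ℝ) :
    correlation hlam.1 φ 1 = lam φ • 1 := by
  ext g; simp [← hlam.2 g φ]

theorem correlation_lTrans_right (hlam : IsLeftInvariantMean G lam) (φ ψ : G →ᵇ ℝ) (h : G) :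
    correlation hlam.1 φ (lTrans G h ψ) = lTrans G h (correlation hlam.1 φ ψ) := by
  ext g
  -- `lam ((g • φ) * (h • ψ)) = lam (h⁻¹ • ((g • φ) * (h • ψ))) = lam (((h⁻¹ g) • φ) * ψ)`
  rw [correlation_apply, lTrans_apply, correlation_apply, ← hlam.2 h⁻¹, lTrans_mul,
    lTrans_lTrans, lTrans_lTrans, inv_mul_cancel, one_lTrans]

/-- The paper's `∫ lam ((g • φ) * ψ) dη(g)`. -/
noncomputable def averagedCorrelation (hlam : IsMean G lam) (eta : (G →ᵇ ℝ) →ₗ[ℝ] ℝ) :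
    (G →ᵇ ℝ) →ₗ[ℝ] (G →ᵇ ℝ) →ₗ[ℝ] ℝ :=
  (correlation hlam).compr₂ eta

theorem averagedCorrelation_apply (hlam : IsMean G lam) (φ ψ : G →ᵇ ℝ) :
    averagedCorrelation hlam eta φ ψ = eta (correlation hlam φ ψ) :=
  rfl

theorem averagedCorrelation_one_left (hlam : IsMean G lam) (heta : IsMean G eta) :
    averagedCorrelation hlam eta 1 = lam := by
  ext ψ
  simp [averagedCorrelation_apply, correlation_one_left, heta.1]

theorem averagedCorrelation_apply_one (hlam : IsLeftInvariantMean G lam) (heta : IsMean G eta)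
    (φ : G →ᵇ ℝ) : averagedCorrelation hlam.1 eta φ 1 = lam φ := by
  simp [averagedCorrelation_apply, correlation_one_right hlam, heta.1]

theorem averagedCorrelation_nonneg (hlam : IsMean G lam) (heta : IsMean G eta) {φ ψ : G →ᵇ ℝ}
    (hφ : 0 ≤ φ) (hψ : 0 ≤ ψ) : 0 ≤ averagedCorrelation hlam eta φ ψ :=
  heta.2 _ (correlation_nonneg hlam hφ hψ)

theorem averagedCorrelation_lTrans (hlam : IsLeftInvariantMean G lam)
    (heta : IsLeftInvariantMean G eta) (φ ψ : G →ᵇ ℝ) (h : G) :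
    averagedCorrelation hlam.1 eta φ (lTrans G h ψ) = averagedCorrelation hlam.1 eta φ ψ := by
  rw [averagedCorrelation_apply, correlation_lTrans_right hlam, heta.2,
    averagedCorrelation_apply]

theorem averagedCorrelation_eq_smul_of_nonneg_of_le_one
    (hlam : lam ∈ Set.extremePoints ℝ {m : (G →ᵇ ℝ) →ₗ[ℝ] ℝ | IsLeftInvariantMean G m})
    (heta : IsLeftInvariantMean G eta) {φ : G →ᵇ ℝ} (hφ₀ : 0 ≤ φ) (hφ₁ : φ ≤ 1) :
    averagedCorrelation hlam.1.1 eta φ = lam φ • lam := by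
  have hlim : IsLeftInvariantMean G lam := hlam.1
  have hφ₀' : 0 ≤ 1 - φ := sub_nonneg.2 hφ₁
  obtain ⟨μ₁, hμ₁, hν₁⟩ := hlim.exists_isLeftInvariantMean_eq_smul
    (fun ψ => averagedCorrelation_nonneg hlim.1 heta.1 hφ₀)
    (fun h ψ => averagedCorrelation_lTrans hlim heta φ ψ h)
  obtain ⟨μ₂, hμ₂, hν₂⟩ := hlim.exists_isLeftInvariantMean_eq_smul
    (fun ψ => averagedCorrelation_nonneg hlim.1 heta.1 hφ₀')
    (fun h ψ => averagedCorrelation_lTrans hlim heta (1 - φ) ψ h)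
  rw [averagedCorrelation_apply_one hlim heta.1] at hν₁ hν₂
  have hsum : lam φ • μ₁ + lam (1 - φ) • μ₂ = lam := by
    rw [← hν₁, ← hν₂, ← map_add, add_sub_cancel, averagedCorrelation_one_left hlim.1 heta.1]
  rw [hν₁]
  exact smul_eq_smul_of_mem_extremePoints hlam hμ₁ hμ₂ (hlim.1.2 φ hφ₀) (hlim.1.2 _ hφ₀')
    (by rw [map_sub, hlim.1.1, add_sub_cancel]) hsum

theorem averagedCorrelation_eq_smulRight
    (hlam : lam ∈ Set.extremePoints ℝ {m : (G →ᵇ ℝ) →ₗ[ℝ] ℝ | IsLeftInvariantMean G m})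
    (heta : IsLeftInvariantMean G eta) :
    averagedCorrelation hlam.1.1 eta = lam.smulRight lam :=
  linearMap_ext_of_nonneg_of_le_one fun _ hφ₀ hφ₁ =>
    averagedCorrelation_eq_smul_of_nonneg_of_le_one hlam heta hφ₀ hφ₁

end Means

theorem weak_ergodic_theorem_general {G : Type*} [Group G]
    [TopologicalSpace G] [DiscreteTopology G]
    (lam : (G →ᵇ ℝ) →ₗ[ℝ] ℝ)
    (hlam : lam ∈ Set.extremePoints ℝ {m : (G →ᵇ ℝ) →ₗ[ℝ] ℝ | IsLeftInvariantMean G m})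
    (eta : (G →ᵇ ℝ) →ₗ[ℝ] ℝ) (heta : IsLeftInvariantMean G eta)
    (φ ψ : G →ᵇ ℝ) (F : G →ᵇ ℝ)
    (hF : ∀ g : G, F g = lam (lTrans G g φ * ψ)) :
    eta F = lam φ * lam ψ := by
  have hF' : F = correlation hlam.1.1 φ ψ := ext hF
  calc eta F = averagedCorrelation hlam.1.1 eta φ ψ := by rw [hF', averagedCorrelation_apply]
    _ = lam φ * lam ψ := by rw [averagedCorrelation_eq_smulRight hlam heta]; rfl

/-- **Weak Ergodic Theorem.** If `lam` is an extreme point of the set of left-invariant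
means on a countable amenable group `G`, then for all `φ, ψ ∈ ℓ∞(G)` and every
left-invariant mean `η`, one has `∫_G lam((g·φ)·ψ) dη(g) = lam(φ)·lam(ψ)`; here the
function `g ↦ lam((g·φ)·ψ)` is represented by the bounded function `F`. -/
theorem weak_ergodic_theorem {G : Type*} [Group G] [Countable G]
    [TopologicalSpace G] [DiscreteTopology G]
    (lam : (G →ᵇ ℝ) →ₗ[ℝ] ℝ)
    (hlam : lam ∈ Set.extremePoints ℝ {m : (G →ᵇ ℝ) →ₗ[ℝ] ℝ | IsLeftInvariantMean G m})
    (eta : (G →ᵇ ℝ) →ₗ[ℝ] ℝ) (heta : IsLeftInvariantMean G eta)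
    (φ ψ : G →ᵇ ℝ) (F : G →ᵇ ℝ)
    (hF : ∀ g : G, F g = lam (lTrans G g φ * ψ)) :
    eta F = lam φ * lam ψ :=
  weak_ergodic_theorem_general lam hlam eta heta φ ψ F hF
end

section
/- For every subset A of a countable amenable group G, the upper Banach density d*(A) equals the supremum of λ(A) over all left-invariant means λ on G, and the lower Banach density d_*(A) equals the corresponding infimum; moreover both the supremum and infimum are attained by extreme left-invariant means. -/
/-!
Averages over a Følner sequence, taken along an ultrafilter, define a left-invariant mean;
choosing the ultrafilter so that the densities of `A` converge to their limsup (liminf) shows that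
every upper (lower) density along a Følner sequence is a value `λ(A)`. Conversely, invariance
makes `λ(A)` the `λ`-mean of `x ↦ |F_n x ∩ A| / |F_n|`, so some right translate `F_n x_n` has
density close to `λ(A)`, and right translates of a Følner sequence are again Følner. Finally, the
left-invariant means form a compact convex set for the topology of pointwise convergence; the face
on which `λ ↦ λ(A)` is maximal (minimal) has an extreme point by Krein–Milman, and it is extreme
in the whole set.
-/

open scoped Classical BoundedContinuousFunction

/-- The indicator function of a set, as an element of ℓ∞(G). -/
noncomputable def indBCF (G : Type*) [Group G] [TopologicalSpace G] [DiscreteTopology G]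
    (A : Set G) : G →ᵇ ℝ :=
  BoundedContinuousFunction.ofNormedAddCommGroup (Set.indicator A 1)
    continuous_of_discreteTopology 1 (by
      intro x
      by_cases h : x ∈ A <;> simp [Set.indicator_apply, h])

open Filter

/-- A (left) Følner sequence of finite subsets of `G`. -/
def IsFolner {G : Type*} [Group G] [DecidableEq G] (F : ℕ → Finset G) : Prop :=
  (∀ n, (F n).Nonempty) ∧
  ∀ g : G,
    Tendsto
      (fun n => ((symmDiff ((F n).image fun t => g * t) (F n)).card : ℝ) / ((F n).card : ℝ))
      atTop (nhds 0)

/-- The upper asymptotic density of `A` along the sequence `F`. -/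
noncomputable def upperDensityAlong {G : Type*} [Group G] (F : ℕ → Finset G) (A : Set G) :
    ℝ :=
  limsup (fun n => (((F n).filter fun x => x ∈ A).card : ℝ) / ((F n).card : ℝ)) atTop

/-- The lower asymptotic density of `A` along the sequence `F`. -/
noncomputable def lowerDensityAlong {G : Type*} [Group G] (F : ℕ → Finset G) (A : Set G) :
    ℝ :=
  liminf (fun n => (((F n).filter fun x => x ∈ A).card : ℝ) / ((F n).card : ℝ)) atTop

open Finset

lemma IsGreatest.of_subset_of_le {α : Type*} [PartialOrder α] {s t : Set α} {a b : α}
    (ht : IsGreatest t a) (hst : s ⊆ t) (hb : b ∈ s) (hab : a ≤ b) : IsGreatest s a :=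
  ⟨le_antisymm (ht.2 (hst hb)) hab ▸ hb, fun _ hx => ht.2 (hst hx)⟩

lemma IsLeast.of_subset_of_le {α : Type*} [PartialOrder α] {s t : Set α} {a b : α}
    (ht : IsLeast t a) (hst : s ⊆ t) (hb : b ∈ s) (hba : b ≤ a) : IsLeast s a :=
  IsGreatest.of_subset_of_le (α := αᵒᵈ) ht hst hb hba

lemma le_limsup_of_forall_sub_inv_lt {u : ℕ → ℝ} {c : ℝ} (hu : IsBoundedUnder (· ≤ ·) atTop u)
    (h : ∀ n : ℕ, c - 1 / ((n : ℝ) + 1) < u n) : c ≤ limsup u atTop := by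
  have hv : Tendsto (fun n : ℕ => c - 1 / ((n : ℝ) + 1)) atTop (nhds c) := by
    simpa using (tendsto_const_nhds (x := c)).sub (tendsto_one_div_add_atTop_nhds_zero_nat (𝕜 := ℝ))
  calc c = limsup (fun n : ℕ => c - 1 / ((n : ℝ) + 1)) atTop := hv.limsup_eq.symm
    _ ≤ limsup u atTop :=
      limsup_le_limsup (Eventually.of_forall fun n => (h n).le) hv.isCoboundedUnder_le hu

lemma liminf_le_of_forall_lt_add_inv {u : ℕ → ℝ} {c : ℝ} (hu : IsBoundedUnder (· ≥ ·) atTop u)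
    (h : ∀ n : ℕ, u n < c + 1 / ((n : ℝ) + 1)) : liminf u atTop ≤ c := by
  have hv : Tendsto (fun n : ℕ => c + 1 / ((n : ℝ) + 1)) atTop (nhds c) := by
    simpa using (tendsto_const_nhds (x := c)).add (tendsto_one_div_add_atTop_nhds_zero_nat (𝕜 := ℝ))
  calc liminf u atTop ≤ liminf (fun n : ℕ => c + 1 / ((n : ℝ) + 1)) atTop :=
      liminf_le_liminf (Eventually.of_forall fun n => (h n).le) hu hv.isCoboundedUnder_ge
    _ = c := hv.liminf_eq

lemma abs_sum_sub_sum_le_card_symmDiff_mul {β : Type*} [DecidableEq β] (s t : Finset β)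
    {f : β → ℝ} {C : ℝ} (hf : ∀ x, |f x| ≤ C) :
    |∑ x ∈ s, f x - ∑ x ∈ t, f x| ≤ #(symmDiff s t) * C := by
  rw [← sum_sdiff_sub_sum_sdiff]
  calc |∑ x ∈ s \ t, f x - ∑ x ∈ t \ s, f x|
      ≤ ∑ x ∈ s \ t, |f x| + ∑ x ∈ t \ s, |f x| :=
        (abs_sub _ _).trans (add_le_add (abs_sum_le_sum_abs _ _) (abs_sum_le_sum_abs _ _))
    _ = ∑ x ∈ symmDiff s t, |f x| := by
        rw [symmDiff_def, sup_eq_union, sum_union disjoint_sdiff_sdiff]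
    _ ≤ #(symmDiff s t) * C := by simpa using sum_le_card_nsmul _ _ C fun x _ => hf x

theorem Set.mem_extremePoints_of_injective_image {𝕜 E F : Type*} [Ring 𝕜] [PartialOrder 𝕜]
    [IsOrderedRing 𝕜] [AddCommGroup E] [Module 𝕜 E] [AddCommGroup F] [Module 𝕜 F]
    {f : E →ₗ[𝕜] F} (hf : Function.Injective f) {s : Set E} {x : E}
    (hx : f x ∈ (f '' s).extremePoints 𝕜) : x ∈ s.extremePoints 𝕜 := by
  refine ⟨hf.mem_set_image.1 hx.1, fun x₁ h₁ x₂ h₂ hseg => hf <| hx.2 ⟨x₁, h₁, rfl⟩ ⟨x₂, h₂, rfl⟩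
    ((image_openSegment 𝕜 f.toAffineMap x₁ x₂).subset ⟨x, hseg, rfl⟩)⟩

section KreinMilman

variable {E : Type*} [AddCommGroup E] [Module ℝ E] [TopologicalSpace E] [T2Space E]
  [IsTopologicalAddGroup E] [ContinuousSMul ℝ E] [LocallyConvexSpace ℝ E] {s : Set E}

theorem IsCompact.exists_mem_extremePoints_isMaxOn (hs : IsCompact s) (hne : s.Nonempty)
    (l : StrongDual ℝ E) : ∃ x ∈ s.extremePoints ℝ, IsMaxOn l s x := by
  have hexp : IsExposed ℝ s (l.toExposed s) := ContinuousLinearMap.toExposed.isExposed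
  obtain ⟨x₀, hx₀, hmax⟩ := hs.exists_isMaxOn hne l.continuous.continuousOn
  obtain ⟨x, hx⟩ := (hexp.isCompact hs).extremePoints_nonempty ⟨x₀, hx₀, fun y hy => hmax hy⟩
  exact ⟨x, hexp.isExtreme.extremePoints_subset_extremePoints hx, isMaxOn_iff.2 hx.1.2⟩

theorem IsCompact.exists_mem_extremePoints_isMinOn (hs : IsCompact s) (hne : s.Nonempty)
    (l : StrongDual ℝ E) : ∃ x ∈ s.extremePoints ℝ, IsMinOn l s x := by
  obtain ⟨x, hx, hneg⟩ := hs.exists_mem_extremePoints_isMaxOn hne (-l)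
  exact ⟨x, hx, isMinOn_iff.2 fun y hy => neg_le_neg_iff.1 (isMaxOn_iff.1 hneg y hy)⟩

end KreinMilman

section Averages

variable {α : Type*} [TopologicalSpace α]

-- `finsetAvg ∅ = 0`, so the bounds below need no nonemptiness.
noncomputable def finsetAvg (s : Finset α) : (α →ᵇ ℝ) →ₗ[ℝ] ℝ :=
  (#s : ℝ)⁻¹ • ∑ t ∈ s,
    ((BoundedContinuousFunction.evalCLM ℝ t : (α →ᵇ ℝ) →L[ℝ] ℝ) : (α →ᵇ ℝ) →ₗ[ℝ] ℝ)

lemma finsetAvg_apply (s : Finset α) (f : α →ᵇ ℝ) : finsetAvg s f = (∑ t ∈ s, f t) / #s := by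
  simp [finsetAvg, div_eq_inv_mul]

lemma abs_finsetAvg_le (s : Finset α) (f : α →ᵇ ℝ) : |finsetAvg s f| ≤ ‖f‖ := by
  rw [finsetAvg_apply, abs_div, Nat.abs_cast]
  refine div_le_of_le_mul₀ (Nat.cast_nonneg _) (norm_nonneg f) ?_
  calc |∑ t ∈ s, f t| ≤ ∑ _t ∈ s, ‖f‖ :=
        (abs_sum_le_sum_abs _ _).trans (sum_le_sum fun t _ => f.norm_coe_le_norm t)
    _ = ‖f‖ * #s := by simp [mul_comm]

lemma isBoundedUnder_le_finsetAvg (F : ℕ → Finset α) (f : α →ᵇ ℝ) :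
    IsBoundedUnder (· ≤ ·) atTop fun n => finsetAvg (F n) f :=
  isBoundedUnder_of ⟨‖f‖, fun _ => (abs_le.1 (abs_finsetAvg_le _ _)).2⟩

lemma isBoundedUnder_ge_finsetAvg (F : ℕ → Finset α) (f : α →ᵇ ℝ) :
    IsBoundedUnder (· ≥ ·) atTop fun n => finsetAvg (F n) f :=
  isBoundedUnder_of ⟨-‖f‖, fun _ => (abs_le.1 (abs_finsetAvg_le _ _)).1⟩

end Averages

section Means

variable {G : Type*} [Group G] [TopologicalSpace G] [DiscreteTopology G]
  {m : (G →ᵇ ℝ) →ₗ[ℝ] ℝ}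

namespace IsMean

lemma mono (hm : IsMean G m) {f g : G →ᵇ ℝ} (hfg : f ≤ g) : m f ≤ m g := by
  simpa using hm.2 (g - f) (sub_nonneg.2 hfg)

lemma apply_const (hm : IsMean G m) (c : ℝ) : m (c • 1) = c := by
  rw [map_smul, hm.1, smul_eq_mul, mul_one]

lemma abs_apply_le_norm (hm : IsMean G m) (f : G →ᵇ ℝ) : |m f| ≤ ‖f‖ := by
  refine abs_le.2 ⟨?_, ?_⟩
  · simpa only [hm.apply_const] using
      hm.mono (f := -‖f‖ • 1) (g := f) fun x => by simpa using f.neg_norm_le_apply x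
  · simpa only [hm.apply_const] using
      hm.mono (f := f) (g := ‖f‖ • 1) fun x => by simpa using f.apply_le_norm x

lemma exists_sub_lt_apply (hm : IsMean G m) (f : G →ᵇ ℝ) {ε : ℝ} (hε : 0 < ε) :
    ∃ x, m f - ε < f x := by
  by_contra! h
  have := hm.mono (f := f) (g := (m f - ε) • 1) fun x => by simpa using h x
  rw [hm.apply_const] at this
  linarith

lemma exists_apply_lt_add (hm : IsMean G m) (f : G →ᵇ ℝ) {ε : ℝ} (hε : 0 < ε) :
    ∃ x, f x < m f + ε := by
  obtain ⟨x, hx⟩ := hm.exists_sub_lt_apply (-f) hε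
  exact ⟨x, by simp only [map_neg, BoundedContinuousFunction.coe_neg, Pi.neg_apply] at hx; linarith⟩

end IsMean

lemma isMean_finsetAvg {s : Finset G} (hs : s.Nonempty) : IsMean G (finsetAvg s) := by
  refine ⟨?_, fun f hf => ?_⟩
  · simp [finsetAvg_apply, hs.card_pos.ne']
  · rw [finsetAvg_apply]
    exact div_nonneg (sum_nonneg fun t _ => hf t) (Nat.cast_nonneg _)

end Means

lemma IsFolner.mul_right {G : Type*} [Group G] [DecidableEq G] {F : ℕ → Finset G}
    (hF : IsFolner F) (x : ℕ → G) : IsFolner fun n => (F n).image (· * x n) := by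
  refine ⟨fun n => (hF.1 n).image _, fun g => (hF.2 g).congr fun n => ?_⟩
  have hinj : Function.Injective (· * x n) := mul_left_injective (x n)
  have hcomm : ((F n).image (· * x n)).image (g * ·) = ((F n).image (g * ·)).image (· * x n) := by
    simp only [image_image, Function.comp_def, mul_assoc]
  rw [hcomm, ← image_symmDiff _ _ hinj, card_image_of_injective _ hinj,
    card_image_of_injective _ hinj]

section FolnerMeans

variable {G : Type*} [Group G] [DecidableEq G] [TopologicalSpace G] [DiscreteTopology G]
  {F : ℕ → Finset G}

lemma abs_finsetAvg_lTrans_sub_le (s : Finset G) (g : G) (f : G →ᵇ ℝ) :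
    |finsetAvg s (lTrans G g f) - finsetAvg s f|
      ≤ ‖f‖ * (#(symmDiff (s.image (g⁻¹ * ·)) s) / #s) := by
  have hsum : ∑ t ∈ s, lTrans G g f t = ∑ t ∈ s.image (g⁻¹ * ·), f t := by
    rw [sum_image fun a _ b _ => mul_left_cancel]
    rfl
  rw [finsetAvg_apply, finsetAvg_apply, hsum, ← sub_div, abs_div, Nat.abs_cast, mul_div_assoc']
  refine div_le_div_of_nonneg_right ?_ (Nat.cast_nonneg _)
  rw [mul_comm]
  exact abs_sum_sub_sum_le_card_symmDiff_mul _ _ fun x => f.norm_coe_le_norm x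

theorem IsFolner.exists_leftInvariantMean_tendsto (hF : IsFolner F) (U : Ultrafilter ℕ)
    (hU : (U : Filter ℕ) ≤ atTop) :
    ∃ m, IsLeftInvariantMean G m ∧
      ∀ f, Tendsto (fun n => finsetAvg (F n) f) (U : Filter ℕ) (nhds (m f)) := by
  have hbox : ∀ n, ⇑(finsetAvg (F n)) ∈ Set.univ.pi fun f : G →ᵇ ℝ => Set.Icc (-‖f‖) ‖f‖ :=
    fun n f _ => abs_le.1 (abs_finsetAvg_le _ _)
  obtain ⟨φ, -, hφ⟩ := (isCompact_univ_pi fun _ => isCompact_Icc).ultrafilter_le_nhds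
    (U.map fun n => ⇑(finsetAvg (F n))) (le_principal_iff.2 (Filter.mem_map.2 (univ_mem' hbox)))
  set m := linearMapOfTendsto φ (fun n => finsetAvg (F n)) hφ
  have hm : ∀ f, Tendsto (fun n => finsetAvg (F n) f) (U : Filter ℕ) (nhds (m f)) :=
    fun f => tendsto_pi_nhds.1 hφ f
  refine ⟨m, ⟨⟨?_, fun f hf => ?_⟩, fun g f => ?_⟩, hm⟩
  · exact tendsto_nhds_unique (hm 1)
      (tendsto_const_nhds.congr fun n => ((isMean_finsetAvg (hF.1 n)).1).symm)
  · exact ge_of_tendsto' (hm f) fun n => (isMean_finsetAvg (hF.1 n)).2 f hf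
  · have hdiff : Tendsto (fun n => finsetAvg (F n) (lTrans G g f) - finsetAvg (F n) f)
        (U : Filter ℕ) (nhds 0) :=
      squeeze_zero_norm (fun n => abs_finsetAvg_lTrans_sub_le (F n) g f)
        (by simpa using ((hF.2 g⁻¹).const_mul ‖f‖).mono_left hU)
    exact tendsto_nhds_unique (hm _) (by simpa using hdiff.add (hm f))

theorem IsFolner.exists_leftInvariantMean_eq_of_mapClusterPt (hF : IsFolner F)
    {f : G →ᵇ ℝ} {c : ℝ} (hc : MapClusterPt c atTop fun n => finsetAvg (F n) f) :
    ∃ m, IsLeftInvariantMean G m ∧ m f = c := by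
  obtain ⟨U, hU, hUc⟩ := mapClusterPt_iff_ultrafilter.1 hc
  obtain ⟨m, hm, hmU⟩ := hF.exists_leftInvariantMean_tendsto U hU
  exact ⟨m, hm, tendsto_nhds_unique (hmU f) hUc⟩

end FolnerMeans

section Densities

variable {G : Type*} [Group G] [TopologicalSpace G] [DiscreteTopology G]

lemma finsetAvg_indBCF (s : Finset G) (A : Set G) :
    finsetAvg s (indBCF G A) = #(s.filter (· ∈ A)) / #s := by
  simp [finsetAvg_apply, indBCF, Set.indicator_apply]

lemma upperDensityAlong_eq_limsup (F : ℕ → Finset G) (A : Set G) :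
    upperDensityAlong F A = limsup (fun n => finsetAvg (F n) (indBCF G A)) atTop := by
  simp only [upperDensityAlong, finsetAvg_indBCF]

lemma lowerDensityAlong_eq_liminf (F : ℕ → Finset G) (A : Set G) :
    lowerDensityAlong F A = liminf (fun n => finsetAvg (F n) (indBCF G A)) atTop := by
  simp only [lowerDensityAlong, finsetAvg_indBCF]

variable [DecidableEq G] {F : ℕ → Finset G}

theorem IsFolner.exists_leftInvariantMean_eq_upperDensityAlong (hF : IsFolner F) (A : Set G) :
    ∃ m, IsLeftInvariantMean G m ∧ m (indBCF G A) = upperDensityAlong F A := by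
  rw [upperDensityAlong_eq_limsup]
  exact hF.exists_leftInvariantMean_eq_of_mapClusterPt <| MapClusterPt.limsup
    (isBoundedUnder_ge_finsetAvg F _).isCoboundedUnder_le (isBoundedUnder_le_finsetAvg F _)

theorem IsFolner.exists_leftInvariantMean_eq_lowerDensityAlong (hF : IsFolner F) (A : Set G) :
    ∃ m, IsLeftInvariantMean G m ∧ m (indBCF G A) = lowerDensityAlong F A := by
  rw [lowerDensityAlong_eq_liminf]
  exact hF.exists_leftInvariantMean_eq_of_mapClusterPt <| MapClusterPt.liminf
    (isBoundedUnder_le_finsetAvg F _).isCoboundedUnder_ge (isBoundedUnder_ge_finsetAvg F _)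

end Densities

section RightTranslates

variable {G : Type*} [Group G] [TopologicalSpace G] [DiscreteTopology G]
  {m : (G →ᵇ ℝ) →ₗ[ℝ] ℝ}

noncomputable def rightTranslateAvg (s : Finset G) (f : G →ᵇ ℝ) : G →ᵇ ℝ :=
  (#s : ℝ)⁻¹ • ∑ t ∈ s, lTrans G t⁻¹ f

lemma IsLeftInvariantMean.apply_rightTranslateAvg (hm : IsLeftInvariantMean G m)
    {s : Finset G} (hs : s.Nonempty) (f : G →ᵇ ℝ) : m (rightTranslateAvg s f) = m f := by
  simp [rightTranslateAvg, hm.2, hs.card_pos.ne']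

variable [DecidableEq G]

lemma rightTranslateAvg_apply (s : Finset G) (f : G →ᵇ ℝ) (x : G) :
    rightTranslateAvg s f x = finsetAvg (s.image (· * x)) f := by
  rw [finsetAvg_apply, sum_image fun _ _ _ _ => mul_right_cancel,
    card_image_of_injective _ (mul_left_injective x)]
  simp [rightTranslateAvg, lTrans, lTransMap, div_eq_inv_mul]

lemma IsLeftInvariantMean.exists_sub_lt_finsetAvg_image_mul_right
    (hm : IsLeftInvariantMean G m) {s : Finset G} (hs : s.Nonempty) (f : G →ᵇ ℝ) {ε : ℝ}
    (hε : 0 < ε) : ∃ x, m f - ε < finsetAvg (s.image (· * x)) f := by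
  simpa [rightTranslateAvg_apply, hm.apply_rightTranslateAvg hs] using
    hm.1.exists_sub_lt_apply (rightTranslateAvg s f) hε

lemma IsLeftInvariantMean.exists_finsetAvg_image_mul_right_lt_add
    (hm : IsLeftInvariantMean G m) {s : Finset G} (hs : s.Nonempty) (f : G →ᵇ ℝ) {ε : ℝ}
    (hε : 0 < ε) : ∃ x, finsetAvg (s.image (· * x)) f < m f + ε := by
  simpa [rightTranslateAvg_apply, hm.apply_rightTranslateAvg hs] using
    hm.1.exists_apply_lt_add (rightTranslateAvg s f) hε

variable {F : ℕ → Finset G}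

theorem IsFolner.exists_le_upperDensityAlong (hF : IsFolner F) (hm : IsLeftInvariantMean G m)
    (A : Set G) : ∃ F', IsFolner F' ∧ m (indBCF G A) ≤ upperDensityAlong F' A := by
  choose x hx using fun n : ℕ => hm.exists_sub_lt_finsetAvg_image_mul_right (hF.1 n)
    (indBCF G A) (Nat.one_div_pos_of_nat (α := ℝ) (n := n))
  refine ⟨_, hF.mul_right x, ?_⟩
  rw [upperDensityAlong_eq_limsup]
  exact le_limsup_of_forall_sub_inv_lt (isBoundedUnder_le_finsetAvg _ _) hx

theorem IsFolner.exists_lowerDensityAlong_le (hF : IsFolner F) (hm : IsLeftInvariantMean G m)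
    (A : Set G) : ∃ F', IsFolner F' ∧ lowerDensityAlong F' A ≤ m (indBCF G A) := by
  choose x hx using fun n : ℕ => hm.exists_finsetAvg_image_mul_right_lt_add (hF.1 n)
    (indBCF G A) (Nat.one_div_pos_of_nat (α := ℝ) (n := n))
  refine ⟨_, hF.mul_right x, ?_⟩
  rw [lowerDensityAlong_eq_liminf]
  exact liminf_le_of_forall_lt_add_inv (isBoundedUnder_ge_finsetAvg _ _) hx

end RightTranslates

section ExtremeMeans

variable {G : Type*} [Group G] [TopologicalSpace G] [DiscreteTopology G]

lemma isClosed_image_coe_leftInvariantMeans :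
    IsClosed ((⇑) '' {m : (G →ᵇ ℝ) →ₗ[ℝ] ℝ | IsLeftInvariantMean G m}) := by
  have hS : (⇑) '' {m : (G →ᵇ ℝ) →ₗ[ℝ] ℝ | IsLeftInvariantMean G m} =
      Set.range ((⇑) : ((G →ᵇ ℝ) →ₗ[ℝ] ℝ) → (G →ᵇ ℝ) → ℝ) ∩
        ({φ | φ 1 = 1} ∩ (⋂ (f : G →ᵇ ℝ) (_ : 0 ≤ f), {φ | 0 ≤ φ f}) ∩
          ⋂ (g : G) (f : G →ᵇ ℝ), {φ | φ (lTrans G g f) = φ f}) := by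
    ext φ
    simp only [Set.mem_image, Set.mem_inter_iff, Set.mem_iInter, Set.mem_ofPred_eq,
      Set.mem_range, IsLeftInvariantMean, IsMean]
    constructor
    · rintro ⟨m, ⟨⟨h1, hpos⟩, hinv⟩, rfl⟩
      exact ⟨⟨m, rfl⟩, ⟨h1, hpos⟩, hinv⟩
    · rintro ⟨⟨m, rfl⟩, ⟨h1, hpos⟩, hinv⟩
      exact ⟨m, ⟨⟨h1, hpos⟩, hinv⟩, rfl⟩
  rw [hS]
  refine (LinearMap.isClosed_range_coe _ _ _).inter (((isClosed_eq (continuous_apply 1)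
    continuous_const).inter (isClosed_biInter fun f _ => isClosed_le continuous_const
      (continuous_apply f))).inter (isClosed_iInter fun g => isClosed_iInter fun f =>
        isClosed_eq (continuous_apply _) (continuous_apply f)))

lemma isCompact_image_coe_leftInvariantMeans :
    IsCompact ((⇑) '' {m : (G →ᵇ ℝ) →ₗ[ℝ] ℝ | IsLeftInvariantMean G m}) :=
  (isCompact_univ_pi fun f : G →ᵇ ℝ => isCompact_Icc (a := -‖f‖) (b := ‖f‖)).of_isClosed_subset
    isClosed_image_coe_leftInvariantMeans
    (by rintro _ ⟨m, hm, rfl⟩ f -; exact abs_le.1 (hm.1.abs_apply_le_norm f))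

theorem exists_mem_extremePoints_isGreatest_leftInvariantMean
    (hne : ∃ m, IsLeftInvariantMean G m) (f : G →ᵇ ℝ) :
    ∃ m ∈ Set.extremePoints ℝ {m : (G →ᵇ ℝ) →ₗ[ℝ] ℝ | IsLeftInvariantMean G m},
      IsGreatest {x | ∃ m, IsLeftInvariantMean G m ∧ m f = x} (m f) := by
  obtain ⟨_, hext, hmax⟩ := isCompact_image_coe_leftInvariantMeans.exists_mem_extremePoints_isMaxOn
    (hne.elim fun m hm => ⟨m, m, hm, rfl⟩) (ContinuousLinearMap.proj f)
  obtain ⟨m, hm, rfl⟩ := hext.1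
  refine ⟨m, Set.mem_extremePoints_of_injective_image (f := LinearMap.ltoFun ℝ _ ℝ ℝ)
    DFunLike.coe_injective hext, ⟨m, hm, rfl⟩, ?_⟩
  rintro _ ⟨m', hm', rfl⟩
  exact isMaxOn_iff.1 hmax _ ⟨m', hm', rfl⟩

theorem exists_mem_extremePoints_isLeast_leftInvariantMean
    (hne : ∃ m, IsLeftInvariantMean G m) (f : G →ᵇ ℝ) :
    ∃ m ∈ Set.extremePoints ℝ {m : (G →ᵇ ℝ) →ₗ[ℝ] ℝ | IsLeftInvariantMean G m},
      IsLeast {x | ∃ m, IsLeftInvariantMean G m ∧ m f = x} (m f) := by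
  obtain ⟨_, hext, hmin⟩ := isCompact_image_coe_leftInvariantMeans.exists_mem_extremePoints_isMinOn
    (hne.elim fun m hm => ⟨m, m, hm, rfl⟩) (ContinuousLinearMap.proj f)
  obtain ⟨m, hm, rfl⟩ := hext.1
  refine ⟨m, Set.mem_extremePoints_of_injective_image (f := LinearMap.ltoFun ℝ _ ℝ ℝ)
    DFunLike.coe_injective hext, ⟨m, hm, rfl⟩, ?_⟩
  rintro _ ⟨m', hm', rfl⟩
  exact isMinOn_iff.1 hmin _ ⟨m', hm', rfl⟩

end ExtremeMeans

theorem banachDensity_eq_mean_sup_inf_general {G : Type*} [Group G] [DecidableEq G]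
    [TopologicalSpace G] [DiscreteTopology G]
    (hamen : ∃ F : ℕ → Finset G, IsFolner F) (A : Set G) :
    (sSup {x : ℝ | ∃ F : ℕ → Finset G, IsFolner F ∧ upperDensityAlong F A = x}
        = sSup {x : ℝ | ∃ m : (G →ᵇ ℝ) →ₗ[ℝ] ℝ,
            IsLeftInvariantMean G m ∧ m (indBCF G A) = x}) ∧
    (sInf {x : ℝ | ∃ F : ℕ → Finset G, IsFolner F ∧ lowerDensityAlong F A = x}
        = sInf {x : ℝ | ∃ m : (G →ᵇ ℝ) →ₗ[ℝ] ℝ,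
            IsLeftInvariantMean G m ∧ m (indBCF G A) = x}) ∧
    (∃ m ∈ Set.extremePoints ℝ {m : (G →ᵇ ℝ) →ₗ[ℝ] ℝ | IsLeftInvariantMean G m},
      m (indBCF G A)
        = sSup {x : ℝ | ∃ F : ℕ → Finset G, IsFolner F ∧ upperDensityAlong F A = x}) ∧
    (∃ m ∈ Set.extremePoints ℝ {m : (G →ᵇ ℝ) →ₗ[ℝ] ℝ | IsLeftInvariantMean G m},
      m (indBCF G A)
        = sInf {x : ℝ | ∃ F : ℕ → Finset G, IsFolner F ∧ lowerDensityAlong F A = x}) := by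
  obtain ⟨F, hF⟩ := hamen
  obtain ⟨m₀, hm₀, -⟩ := hF.exists_leftInvariantMean_eq_upperDensityAlong A
  obtain ⟨mSup, hmSup, hSup⟩ :=
    exists_mem_extremePoints_isGreatest_leftInvariantMean ⟨m₀, hm₀⟩ (indBCF G A)
  obtain ⟨mInf, hmInf, hInf⟩ :=
    exists_mem_extremePoints_isLeast_leftInvariantMean ⟨m₀, hm₀⟩ (indBCF G A)
  obtain ⟨FSup, hFSup, hleSup⟩ := hF.exists_le_upperDensityAlong hmSup.1 A
  obtain ⟨FInf, hFInf, hleInf⟩ := hF.exists_lowerDensityAlong_le hmInf.1 A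
  have hUpper : IsGreatest {x | ∃ F, IsFolner F ∧ upperDensityAlong F A = x}
      (mSup (indBCF G A)) :=
    hSup.of_subset_of_le (fun _ ⟨F', hF', hx⟩ =>
      hx ▸ hF'.exists_leftInvariantMean_eq_upperDensityAlong A) ⟨FSup, hFSup, rfl⟩ hleSup
  have hLower : IsLeast {x | ∃ F, IsFolner F ∧ lowerDensityAlong F A = x}
      (mInf (indBCF G A)) :=
    hInf.of_subset_of_le (fun _ ⟨F', hF', hx⟩ =>
      hx ▸ hF'.exists_leftInvariantMean_eq_lowerDensityAlong A) ⟨FInf, hFInf, rfl⟩ hleInf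
  exact ⟨hUpper.csSup_eq.trans hSup.csSup_eq.symm, hLower.csInf_eq.trans hInf.csInf_eq.symm,
    ⟨mSup, hmSup, hUpper.csSup_eq.symm⟩, ⟨mInf, hmInf, hLower.csInf_eq.symm⟩⟩

/-- For every subset `A` of a countable amenable group `G`: the upper Banach density
(sup over Følner sequences of upper densities) equals the supremum of `λ(A)` over
left-invariant means `λ`; the lower Banach density equals the corresponding infimum;
and both are attained by extreme left-invariant means. -/
theorem banachDensity_eq_mean_sup_inf {G : Type*} [Group G] [Countable G] [DecidableEq G]
    [TopologicalSpace G] [DiscreteTopology G]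
    (hamen : ∃ F : ℕ → Finset G, IsFolner F) (A : Set G) :
    (sSup {x : ℝ | ∃ F : ℕ → Finset G, IsFolner F ∧ upperDensityAlong F A = x}
        = sSup {x : ℝ | ∃ m : (G →ᵇ ℝ) →ₗ[ℝ] ℝ,
            IsLeftInvariantMean G m ∧ m (indBCF G A) = x}) ∧
    (sInf {x : ℝ | ∃ F : ℕ → Finset G, IsFolner F ∧ lowerDensityAlong F A = x}
        = sInf {x : ℝ | ∃ m : (G →ᵇ ℝ) →ₗ[ℝ] ℝ,
            IsLeftInvariantMean G m ∧ m (indBCF G A) = x}) ∧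
    (∃ m ∈ Set.extremePoints ℝ {m : (G →ᵇ ℝ) →ₗ[ℝ] ℝ | IsLeftInvariantMean G m},
      m (indBCF G A)
        = sSup {x : ℝ | ∃ F : ℕ → Finset G, IsFolner F ∧ upperDensityAlong F A = x}) ∧
    (∃ m ∈ Set.extremePoints ℝ {m : (G →ᵇ ℝ) →ₗ[ℝ] ℝ | IsLeftInvariantMean G m},
      m (indBCF G A)
        = sInf {x : ℝ | ∃ F : ℕ → Finset G, IsFolner F ∧ lowerDensityAlong F A = x}) :=
  banachDensity_eq_mean_sup_inf_general hamen A
end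

section
/- Let H be a compact second countable group and (B_j) a Dirac sequence in H. For every Borel set D ⊂ H of positive Haar measure, there exist a Borel subset D' ⊂ D with m_H(D') = m_H(D) and a subsequence (B_{j_k}) such that D' is balanced with respect to (B_{j_k}), i.e., for all s ∈ D', lim_k m_H(D' ∩ sB_{j_k})/m_H(B_{j_k}) = 1. -/
/-!
Put `e j s = μ (Dᶜ ∩ s • B j) / μ (B j)`. Fubini on `{(s, t) | s ∈ D, s * t ∉ D, t ∈ B j}` and left
invariance give `∫ s in D, e j s = (∫ t in B j, μ (D \ D t⁻¹)) / μ (B j)`. Haar measure on a compact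
group is also right invariant, so translation is continuous in measure: `μ (D \ D t⁻¹) → 0` as
`t → 1`. Since the `B j` shrink to `1`, `e j → 0` in `L¹(D)`, hence a subsequence tends to `0`
almost everywhere on `D`. Take for `D'` the set of `s ∈ D` where it does; there
`μ (D' ∩ s • B j) / μ (B j) = 1 - e j s → 1`.
-/

open MeasureTheory Filter Set Topology
open scoped Pointwise ENNReal

theorem Antitone.eventually_subset_of_iInter_eq_singleton {X : Type*} [TopologicalSpace X]
    {B : ℕ → Set X} (hanti : Antitone B) (hcpt : ∀ j, IsCompact (B j))
    (hclosed : ∀ j, IsClosed (B j)) {x : X} (hinter : ⋂ j, B j = {x}) {U : Set X}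
    (hU : U ∈ 𝓝 x) : ∀ᶠ j in atTop, B j ⊆ U := by
  obtain ⟨j₀, hj₀⟩ := exists_subset_nhds_of_isCompact' hanti.directed_ge hcpt hclosed
    (by simpa [hinter] using hU)
  exact eventually_atTop.2 ⟨j₀, fun j hj => (hanti hj).trans hj₀⟩

section Group

variable {G : Type*} [Group G] [MeasurableSpace G]

noncomputable def densityRatio (μ : Measure G) (A B : Set G) (s : G) : ℝ :=
  (μ (A ∩ s • B)).toReal / (μ B).toReal

section LeftInvariant

variable [MeasurableMul₂ G] (μ : Measure G) [μ.IsMulLeftInvariant]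

theorem measure_inter_smul_eq_measure_preimage_mul_left_inter (E B : Set G) (s : G) :
    μ (E ∩ s • B) = μ ((s * ·) ⁻¹' E ∩ B) := by
  rw [← measure_preimage_mul μ s (E ∩ s • B)]
  congr 1
  ext t
  simp [mem_smul_set_iff_inv_smul_mem]

theorem measurable_measure_inter_smul [SFinite μ] {E B : Set G} (hE : MeasurableSet E)
    (hB : MeasurableSet B) : Measurable fun s : G => μ (E ∩ s • B) := by
  simp_rw [measure_inter_smul_eq_measure_preimage_mul_left_inter]
  exact measurable_measure_prodMk_left
    ((measurable_mul hE).inter (measurable_snd hB))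

theorem setLIntegral_measure_inter_smul [SFinite μ] {C E B : Set G} (hC : MeasurableSet C)
    (hE : MeasurableSet E) (hB : MeasurableSet B) :
    ∫⁻ s in C, μ (E ∩ s • B) ∂μ = ∫⁻ t in B, μ (C ∩ (· * t) ⁻¹' E) ∂μ := by
  let S : Set (G × G) := {p | p.1 ∈ C ∧ p.1 * p.2 ∈ E ∧ p.2 ∈ B}
  have hS : MeasurableSet S :=
    (measurable_fst hC).inter ((measurable_mul hE).inter (measurable_snd hB))
  rw [← lintegral_indicator hC, ← lintegral_indicator hB]
  calc ∫⁻ s, C.indicator (fun s => μ (E ∩ s • B)) s ∂μ = μ.prod μ S := by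
        rw [Measure.prod_apply hS]
        congr 1; ext s
        by_cases hs : s ∈ C
        · simp [S, hs, measure_inter_smul_eq_measure_preimage_mul_left_inter]; rfl
        · simp [S, hs]
    _ = ∫⁻ t, B.indicator (fun t => μ (C ∩ (· * t) ⁻¹' E)) t ∂μ := by
        rw [Measure.prod_apply_symm hS]
        congr 1; ext t
        by_cases ht : t ∈ B
        · simp [S, ht]; rfl
        · simp [S, ht]

end LeftInvariant

variable {μ : Measure G}

theorem densityRatio_congr {A A' : Set G} (h : A =ᵐ[μ] A') (B : Set G) (s : G) :
    densityRatio μ A B s = densityRatio μ A' B s := by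
  rw [densityRatio, densityRatio, measure_congr (h.inter (EventuallyEq.refl _ (s • B)))]

theorem densityRatio_eq_one_sub_densityRatio_compl [MeasurableMul G] [IsFiniteMeasure μ]
    [μ.IsMulLeftInvariant] {A : Set G} (hA : MeasurableSet A) {B : Set G} (hB : μ B ≠ 0)
    (s : G) : densityRatio μ A B s = 1 - densityRatio μ Aᶜ B s := by
  have hsum : μ (A ∩ s • B) + μ (Aᶜ ∩ s • B) = μ B := by
    rw [← measure_smul μ s B, ← measure_inter_add_sdiff (s • B) hA, sdiff_eq, inter_comm A,
      inter_comm Aᶜ]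
  have hsum' : (μ (A ∩ s • B)).toReal + (μ (Aᶜ ∩ s • B)).toReal = (μ B).toReal := by
    rw [← ENNReal.toReal_add (measure_ne_top _ _) (measure_ne_top _ _), hsum]
  have hB' : (μ B).toReal ≠ 0 := ENNReal.toReal_ne_zero.2 ⟨hB, measure_ne_top μ B⟩
  rw [densityRatio, densityRatio, eq_sub_iff_add_eq, ← add_div, hsum', div_self hB']

theorem measurable_densityRatio [MeasurableMul₂ G] [SFinite μ] [μ.IsMulLeftInvariant]
    {A B : Set G} (hA : MeasurableSet A) (hB : MeasurableSet B) :
    Measurable (densityRatio μ A B) :=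
  (measurable_measure_inter_smul μ hA hB).ennreal_toReal.div_const _

theorem eLpNorm_densityRatio [IsFiniteMeasure μ] (A : Set G) {B : Set G} (hB : μ B ≠ 0)
    (ν : Measure G) : eLpNorm (densityRatio μ A B) 1 ν = (∫⁻ s, μ (A ∩ s • B) ∂ν) / μ B := by
  have h : ∀ s, ‖densityRatio μ A B s‖ₑ = μ (A ∩ s • B) * (μ B)⁻¹ := fun s => by
    rw [densityRatio, ← ENNReal.toReal_div,
      Real.enorm_toReal (ENNReal.div_ne_top (measure_ne_top _ _) hB), div_eq_mul_inv]
  simp_rw [eLpNorm_one_eq_lintegral_enorm, h]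
  rw [lintegral_mul_const' _ _ (ENNReal.inv_ne_top.2 hB), div_eq_mul_inv]

end Group

section TopologicalGroup

variable {G : Type*} [Group G] [TopologicalSpace G] [IsTopologicalGroup G]
  [MeasurableSpace G] [BorelSpace G]

theorem isMulRightInvariant_of_compactSpace [CompactSpace G] (μ : Measure G) [μ.IsHaarMeasure] :
    μ.IsMulRightInvariant := by
  refine ⟨fun t => ?_⟩
  have h := Measure.isMulInvariant_eq_smul_of_compactSpace (μ.map (· * t)) μ
  have hc : (μ.map (· * t)).haarScalarFactor μ = 1 := by
    have h1 := congr($h univ)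
    rw [Measure.map_apply (measurable_mul_const t) MeasurableSet.univ, preimage_univ,
      Measure.smul_apply, ENNReal.smul_def, smul_eq_mul] at h1
    exact_mod_cast (ENNReal.mul_eq_right (NeZero.ne (μ univ)) (measure_ne_top μ univ)).1 h1.symm
  rw [h, hc, one_smul]

theorem tendsto_measure_diff_preimage_mul_right (μ : Measure G) [μ.IsMulRightInvariant]
    [μ.InnerRegularCompactLTTop] [IsLocallyFiniteMeasure μ] {D : Set G}
    (hD : NullMeasurableSet D μ) (hμD : μ D ≠ ∞) :
    Tendsto (fun t => μ (D \ (· * t) ⁻¹' D)) (𝓝 1) (𝓝 0) := by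
  let F : C(G, C(G, G)) := ContinuousMap.curry ⟨fun p : G × G => p.2 * p.1, by fun_prop⟩
  have h := tendsto_measure_symmDiff_preimage_nhds_zero (F.continuous.tendsto 1)
    (Eventually.of_forall fun t => measurePreserving_mul_right μ t)
    (measurePreserving_mul_right μ 1) hD hμD
  have hF1 : ⇑(F 1) ⁻¹' D = D := by ext; simp [F]
  rw [hF1] at h
  refine tendsto_of_tendsto_of_tendsto_of_le_of_le tendsto_const_nhds h (fun _ => zero_le)
    fun t => measure_mono ?_
  rw [symmDiff_def]
  exact subset_union_right

theorem tendsto_setLIntegral_measure_compl_inter_smul_div [MeasurableMul₂ G] (μ : Measure G)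
    [μ.IsMulLeftInvariant] [μ.IsMulRightInvariant] [SFinite μ] [μ.InnerRegularCompactLTTop]
    [IsLocallyFiniteMeasure μ] {D : Set G} (hD : MeasurableSet D) (hμD : μ D ≠ ∞)
    {ι : Type*} {l : Filter ι} {B : ι → Set G} (hB : ∀ i, MeasurableSet (B i))
    (hB1 : ∀ U ∈ 𝓝 (1 : G), ∀ᶠ i in l, B i ⊆ U) :
    Tendsto (fun i => (∫⁻ s in D, μ (Dᶜ ∩ s • B i) ∂μ) / μ (B i)) l (𝓝 0) := by
  refine ENNReal.tendsto_nhds_zero.2 fun ε hε => ?_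
  have hsmall := ENNReal.tendsto_nhds_zero.1
    (tendsto_measure_diff_preimage_mul_right μ hD.nullMeasurableSet hμD) ε hε
  filter_upwards [hB1 _ hsmall] with i hi
  calc (∫⁻ s in D, μ (Dᶜ ∩ s • B i) ∂μ) / μ (B i)
      = (∫⁻ t in B i, μ (D \ (· * t) ⁻¹' D) ∂μ) / μ (B i) := by
        rw [setLIntegral_measure_inter_smul μ hD hD.compl (hB i)]
        simp only [preimage_compl, sdiff_eq]
    _ ≤ (∫⁻ _ in B i, ε ∂μ) / μ (B i) :=
        ENNReal.div_le_div_right (setLIntegral_mono measurable_const fun t ht => hi ht) _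
    _ ≤ ε := by
        rw [setLIntegral_const]
        exact ENNReal.div_le_of_le_mul le_rfl

end TopologicalGroup

theorem exists_balanced_subset_general {H : Type*} [Group H] [TopologicalSpace H]
    [IsTopologicalGroup H] [CompactSpace H] [SecondCountableTopology H]
    [MeasurableSpace H] [BorelSpace H]
    (μ : Measure H) [μ.IsHaarMeasure]
    (B : ℕ → Set H) (hclosed : ∀ j, IsClosed (B j)) (hanti : Antitone B)
    (hinter : ⋂ j, B j = {1}) (hpos : ∀ j, 0 < μ (B j))
    (D : Set H) (hD : MeasurableSet D) :
    ∃ D' : Set H, D' ⊆ D ∧ MeasurableSet D' ∧ μ D' = μ D ∧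
      ∃ φ : ℕ → ℕ, StrictMono φ ∧
        ∀ s ∈ D',
          Tendsto (fun k => (μ (D' ∩ s • B (φ k))).toReal / (μ (B (φ k))).toReal)
            atTop (nhds 1) := by
  have : μ.IsMulRightInvariant := isMulRightInvariant_of_compactSpace μ
  have hBm : ∀ j, MeasurableSet (B j) := fun j => (hclosed j).measurableSet
  have hL1 : Tendsto (fun j => eLpNorm (densityRatio μ Dᶜ (B j) - 0) 1 (μ.restrict D))
      atTop (𝓝 0) := by
    simpa only [sub_zero, eLpNorm_densityRatio _ (hpos _).ne'] using
      tendsto_setLIntegral_measure_compl_inter_smul_div μ hD (measure_ne_top μ D) hBm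
        fun U hU => hanti.eventually_subset_of_iInter_eq_singleton
          (fun j => (hclosed j).isCompact) hclosed hinter hU
  obtain ⟨φ, hφ, hae⟩ := (tendstoInMeasure_of_tendsto_eLpNorm one_ne_zero
    (fun j => (measurable_densityRatio hD.compl (hBm j)).aestronglyMeasurable)
    aestronglyMeasurable_const hL1).exists_seq_tendsto_ae
  set S : Set H := {s | Tendsto (fun k => densityRatio μ Dᶜ (B (φ k)) s) atTop (𝓝 0)}
  have hS : MeasurableSet S :=
    measurableSet_tendsto _ fun k => measurable_densityRatio hD.compl (hBm (φ k))
  have hμ : μ (D ∩ S) = μ D := by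
    rw [inter_comm, ← Measure.restrict_apply hS, (ae_iff_measure_eq hS.nullMeasurableSet).1 hae,
      Measure.restrict_apply_univ]
  refine ⟨D ∩ S, inter_subset_left, hD.inter hS, hμ, φ, hφ, fun s ⟨_, hsS⟩ => ?_⟩
  have hae_eq : (D ∩ S : Set H) =ᵐ[μ] D := ae_eq_of_subset_of_measure_ge inter_subset_left hμ.ge
    (hD.inter hS).nullMeasurableSet (measure_ne_top μ D)
  have key : ∀ k, densityRatio μ (D ∩ S) (B (φ k)) s = 1 - densityRatio μ Dᶜ (B (φ k)) s :=
    fun k => by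
      rw [densityRatio_congr hae_eq, densityRatio_eq_one_sub_densityRatio_compl hD (hpos _).ne']
  have hlim := (tendsto_const_nhds (x := (1 : ℝ))).sub hsS
  rw [sub_zero] at hlim
  exact hlim.congr fun k => (key k).symm

/-- Given a Dirac sequence `(B j)` in a compact second countable group `H` and a Borel
set `D` of positive Haar measure, there exist a Borel subset `D' ⊆ D` of full relative
measure and a subsequence `(B (φ k))` with respect to which `D'` is balanced:
`m(D' ∩ sB_{φ k})/m(B_{φ k}) → 1` for every `s ∈ D'`. -/
theorem exists_balanced_subset {H : Type*} [Group H] [TopologicalSpace H]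
    [IsTopologicalGroup H] [CompactSpace H] [SecondCountableTopology H]
    [MeasurableSpace H] [BorelSpace H]
    (μ : Measure H) [μ.IsHaarMeasure] [IsProbabilityMeasure μ]
    (B : ℕ → Set H) (hclosed : ∀ j, IsClosed (B j)) (hanti : Antitone B)
    (hinter : ⋂ j, B j = {1}) (hpos : ∀ j, 0 < μ (B j))
    (D : Set H) (hD : MeasurableSet D) (hDpos : 0 < μ D) :
    ∃ D' : Set H, D' ⊆ D ∧ MeasurableSet D' ∧ μ D' = μ D ∧
      ∃ φ : ℕ → ℕ, StrictMono φ ∧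
        ∀ s ∈ D',
          Tendsto (fun k => (μ (D' ∩ s • B (φ k))).toReal / (μ (B (φ k))).toReal)
            atTop (nhds 1) :=
  exists_balanced_subset_general μ B hclosed hanti hinter hpos D hD
end

section
/- Let H be a compact second countable group, L < H a closed subgroup, and Γ < L a dense subgroup. If D ⊂ H is a Borel set of positive Haar measure that is balanced with respect to some Dirac sequence, then m_H(ΓD) = m_H(LD). -/
/-!
Let `E` be a measurable hull of `ΓD`. As `ΓD` is `Γ`-invariant, `E` is a.e. invariant under `Γ`,
and since the a.e. stabilizer of a set is closed, `E` is a.e. invariant under `L ⊆ closure Γ`.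
Balance of `D` then shows that `E` fills at least half of `h B_j` for large `j` at every point
`h = l s` of `LD`. On the other hand, by Fubini the integral of `μ(h B_j ∩ E)` over `h ∉ E` is
at most `μ(B_j) · sup_{b ∈ B_j} μ(E b⁻¹ \ E)`, which is `o(μ(B_j))` because right translation is
continuous in measure (Haar measure on a compact group is bi-invariant). By Markov's inequality
`LD \ E` is null, so `μ(LD) ≤ μ(E) = μ(ΓD)`.
-/

open MeasureTheory Filter Set
open scoped Pointwise symmDiff Topology ENNReal

theorem MeasureTheory.Measure.isMulRightInvariant_of_compactSpace {H : Type*} [Group H]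
    [TopologicalSpace H] [IsTopologicalGroup H] [CompactSpace H] [MeasurableSpace H] [BorelSpace H]
    (μ : Measure H) [μ.IsHaarMeasure] : μ.IsMulRightInvariant := by
  refine ⟨fun g => ?_⟩
  have hμ' := Measure.isMulInvariant_eq_smul_of_compactSpace (μ.map (· * g)) μ
  have huniv : μ.map (· * g) univ = μ univ := by
    rw [Measure.map_apply (measurable_mul_const g) MeasurableSet.univ, preimage_univ]
  rw [hμ', Measure.smul_apply, ENNReal.smul_def, smul_eq_mul,
    ENNReal.mul_eq_right (NeZero.ne (μ univ)) (measure_ne_top μ univ)] at huniv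
  rw [hμ', ENNReal.coe_eq_one.1 huniv, one_smul]

theorem tendsto_smallSets_nhds_of_iInter_eq {X : Type*} [TopologicalSpace X] [CompactSpace X]
    {B : ℕ → Set X} {x : X} (hcl : ∀ j, IsClosed (B j)) (hanti : Antitone B)
    (hinter : ⋂ j, B j = {x}) : Tendsto B atTop (𝓝 x).smallSets := by
  refine tendsto_smallSets_iff.2 fun U hU => ?_
  obtain ⟨N, hN⟩ := exists_subset_nhds_of_isCompact' hanti.directed_ge
    (fun j => (hcl j).isCompact) hcl (by simpa [hinter] using hU)
  exact eventually_atTop.2 ⟨N, fun j hj => (hanti hj).trans hN⟩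

theorem Filter.Tendsto.eventually_mul_le_of_toReal_div {ι : Type*} {l : Filter ι}
    {f g : ι → ℝ≥0∞} (h : Tendsto (fun j => (f j).toReal / (g j).toReal) l (𝓝 1))
    {c : ℝ≥0∞} (hc : c < 1) : ∀ᶠ j in l, c * g j ≤ f j := by
  have hc' : c.toReal < 1 := by
    simpa using (ENNReal.toReal_lt_toReal hc.ne_top ENNReal.one_ne_top).2 hc
  filter_upwards [h.eventually (lt_mem_nhds hc')] with j hj
  rcases eq_or_ne (f j) ∞ with hf | hf
  · exact hf ▸ le_top
  -- if `g j` is `0` or `∞`, the ratio has the junk value `0`, which is not above `c.toReal`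
  rcases (ENNReal.toReal_nonneg (a := g j)).eq_or_lt with hg | hg
  · rw [← hg, div_zero] at hj
    exact absurd hj ENNReal.toReal_nonneg.not_gt
  rw [lt_div_iff₀ hg] at hj
  rw [← ENNReal.toReal_le_toReal (ENNReal.mul_ne_top hc.ne_top (ENNReal.toReal_pos_iff.1 hg).2.ne)
    hf, ENNReal.toReal_mul]
  exact hj.le

theorem MeasureTheory.MeasurePreserving.preimage_toMeasurable_ae_eq {α : Type*}
    [MeasurableSpace α] {μ : Measure α} {f : α → α} (hf : MeasurePreserving f μ μ) {s : Set α}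
    (hs : s ⊆ f ⁻¹' s) (hμs : μ s ≠ ∞) : f ⁻¹' toMeasurable μ s =ᵐ[μ] toMeasurable μ s := by
  set t : Set α := toMeasurable μ s
  have ht : MeasurableSet t := measurableSet_toMeasurable μ s
  have hμt : μ t ≠ ∞ := by rwa [measure_toMeasurable]
  have hst : s ⊆ t ∩ f ⁻¹' t :=
    subset_inter (subset_toMeasurable μ s) (hs.trans (preimage_mono (subset_toMeasurable μ s)))
  have hle : μ t ≤ μ (t ∩ f ⁻¹' t) := (measure_toMeasurable s).le.trans (measure_mono hst)
  have hnull : NullMeasurableSet (t ∩ f ⁻¹' t) μ := (ht.inter (hf.measurable ht)).nullMeasurableSet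
  have h₁ : (t ∩ f ⁻¹' t : Set α) =ᵐ[μ] t :=
    ae_eq_of_subset_of_measure_ge inter_subset_left hle hnull hμt
  have h₂ : (t ∩ f ⁻¹' t : Set α) =ᵐ[μ] f ⁻¹' t :=
    ae_eq_of_subset_of_measure_ge inter_subset_right
      (by rwa [hf.measure_preimage ht.nullMeasurableSet]) hnull
      (by rwa [hf.measure_preimage ht.nullMeasurableSet])
  exact h₂.symm.trans h₁

section Action

variable {M X : Type*} [TopologicalSpace M] [SMul M X] [TopologicalSpace X] [R1Space X]
  [MeasurableSpace X] [BorelSpace X] [ContinuousSMul M X] {μ : Measure X}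
  [IsLocallyFiniteMeasure μ] [μ.InnerRegularCompactLTTop] [SMulInvariantMeasure M X μ]

theorem isClosed_setOf_preimage_smul_ae_eq {s : Set X} (hs : NullMeasurableSet s μ)
    (hμs : μ s ≠ ∞) : IsClosed {g : M | (g • ·) ⁻¹' s =ᵐ[μ] s} :=
  let f : C(M × X, X) := ⟨(· • ·).uncurry, continuous_smul⟩
  isClosed_setOfPred_preimage_ae_eq f.curry.continuous (measurePreserving_smul · μ) _ hs hμs

end Action

section Density

variable {H : Type*} [Group H] [MeasurableSpace H] {μ : Measure H}

theorem measure_smul_inter_eq [MeasurableMul H] [μ.IsMulLeftInvariant] (h : H) (B E : Set H) :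
    μ (h • B ∩ E) = μ ((h * ·) ⁻¹' E ∩ B) := by
  rw [inter_comm _ B, ← measure_smul μ h⁻¹, smul_set_inter, inv_smul_smul, ← preimage_smul]
  rfl

theorem measure_smul_inter_of_preimage_ae_eq [MeasurableMul H] [μ.IsMulLeftInvariant] {l : H}
    {E : Set H} (hl : (l * ·) ⁻¹' E =ᵐ[μ] E) (t : Set H) : μ (l • t ∩ E) = μ (t ∩ E) := by
  rw [measure_smul_inter_eq, inter_comm]
  exact measure_congr (ae_eq_set_inter (ae_eq_refl t) hl)

variable [MeasurableMul₂ H] [SFinite μ] [μ.IsMulLeftInvariant] {B E : Set H}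

theorem measurable_measure_smul_inter (hB : MeasurableSet B) (hE : MeasurableSet E) :
    Measurable fun h : H => μ (h • B ∩ E) := by
  simp_rw [measure_smul_inter_eq]
  exact measurable_measure_prodMk_left ((hE.preimage measurable_mul).inter
    (hB.preimage measurable_snd))

theorem setLIntegral_measure_smul_inter (A : Set H) (hE : MeasurableSet E) :
    ∫⁻ h in A, μ (h • B ∩ E) ∂μ = ∫⁻ b in B, μ ((· * b) ⁻¹' E ∩ A) ∂μ := by
  have hind : Measurable fun p : H × H => E.indicator (1 : H → ℝ≥0∞) (p.1 * p.2) :=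
    (measurable_one.indicator hE).comp measurable_mul
  calc ∫⁻ h in A, μ (h • B ∩ E) ∂μ
        = ∫⁻ h in A, ∫⁻ b in B, E.indicator (1 : H → ℝ≥0∞) (h * b) ∂μ ∂μ := by
        refine lintegral_congr fun h => ?_
        rw [measure_smul_inter_eq, ← Measure.restrict_apply (hE.preimage (measurable_const_mul h)),
          ← lintegral_indicator_one (hE.preimage (measurable_const_mul h))]
        rfl
    _ = ∫⁻ b in B, ∫⁻ h in A, E.indicator (1 : H → ℝ≥0∞) (h * b) ∂μ ∂μ :=
        lintegral_lintegral_swap hind.aemeasurable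
    _ = ∫⁻ b in B, μ ((· * b) ⁻¹' E ∩ A) ∂μ := by
        refine lintegral_congr fun b => ?_
        rw [← Measure.restrict_apply (hE.preimage (measurable_mul_const b)),
          ← lintegral_indicator_one (hE.preimage (measurable_mul_const b))]
        rfl

theorem mul_measure_setOf_le_measure_smul_inter_le (hB : MeasurableSet B) (hE : MeasurableSet E)
    {c ε : ℝ≥0∞} (hε : ∀ b ∈ B, μ ((· * b) ⁻¹' E \ E) ≤ ε) :
    c * μ {h | h ∉ E ∧ c ≤ μ (h • B ∩ E)} ≤ ε * μ B :=
  calc c * μ {h | h ∉ E ∧ c ≤ μ (h • B ∩ E)}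
      = c * μ.restrict Eᶜ {h | c ≤ μ (h • B ∩ E)} := by
        rw [Measure.restrict_apply' hE.compl, inter_comm]; rfl
    _ ≤ ∫⁻ h in Eᶜ, μ (h • B ∩ E) ∂μ :=
        mul_meas_ge_le_lintegral₀ (measurable_measure_smul_inter hB hE).aemeasurable c
    _ = ∫⁻ b in B, μ ((· * b) ⁻¹' E \ E) ∂μ := setLIntegral_measure_smul_inter _ hE
    _ ≤ ∫⁻ _ in B, ε ∂μ := setLIntegral_mono' hB hε
    _ = ε * μ B := setLIntegral_const B ε

end Density

section Topological

variable {H : Type*} [Group H] [TopologicalSpace H] [IsTopologicalGroup H] [MeasurableSpace H]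
  [BorelSpace H] {μ : Measure H} [IsFiniteMeasure μ] [μ.InnerRegularCompactLTTop]

theorem preimage_mul_left_toMeasurable_ae_eq_of_mem_closure [μ.IsMulLeftInvariant]
    (Γ : Subgroup H) (D : Set H) {l : H} (hl : l ∈ closure (Γ : Set H)) :
    (l * ·) ⁻¹' toMeasurable μ ((Γ : Set H) * D) =ᵐ[μ] toMeasurable μ ((Γ : Set H) * D) := by
  have hΓ : (Γ : Set H) ⊆ {g | (g • ·) ⁻¹' toMeasurable μ ((Γ : Set H) * D) =ᵐ[μ]
      toMeasurable μ ((Γ : Set H) * D)} := fun γ hγ =>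
    (measurePreserving_smul γ μ).preimage_toMeasurable_ae_eq
      (by rw [preimage_smul, ← smul_mul_assoc, smul_coe_set (inv_mem hγ)]) (measure_ne_top _ _)
  exact (isClosed_setOf_preimage_smul_ae_eq (measurableSet_toMeasurable _ _).nullMeasurableSet
    (measure_ne_top _ _)).closure_subset_iff.2 hΓ hl

theorem tendsto_measure_preimage_mul_right_symmDiff [μ.IsMulRightInvariant] {E : Set H}
    (hE : NullMeasurableSet E μ) : Tendsto (fun g => μ (((· * g) ⁻¹' E) ∆ E)) (𝓝 1) (𝓝 0) := by
  let f : C(H × H, H) := ⟨fun p => p.2 * p.1, by fun_prop⟩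
  refine (tendsto_measure_symmDiff_preimage_nhds_zero (f.curry.continuous.tendsto 1)
    (.of_forall (measurePreserving_mul_right μ)) (measurePreserving_mul_right μ 1) hE
    (measure_ne_top μ E)).congr fun g => ?_
  change μ (((· * g) ⁻¹' E) ∆ ((· * 1) ⁻¹' E)) = _
  simp

theorem measure_setOf_notMem_eventually_le_measure_smul_inter_eq_zero [MeasurableMul₂ H]
    [μ.IsMulLeftInvariant] [μ.IsMulRightInvariant] {B : ℕ → Set H} {E : Set H}
    (hB : ∀ j, MeasurableSet (B j)) (hB₀ : ∀ j, μ (B j) ≠ 0)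
    (hB₁ : Tendsto B atTop (𝓝 1).smallSets) (hE : MeasurableSet E) {c : ℝ≥0∞} (hc₀ : c ≠ 0)
    (hc : c ≠ ∞) : μ {h | h ∉ E ∧ ∀ᶠ j in atTop, c * μ (B j) ≤ μ (h • B j ∩ E)} = 0 := by
  have hT : ∀ N, μ {h | h ∉ E ∧ ∀ j ≥ N, c * μ (B j) ≤ μ (h • B j ∩ E)} = 0 := by
    intro N
    refine nonpos_iff_eq_zero.1 (ENNReal.le_of_forall_pos_le_add fun ε hε _ => ?_)
    have hcε : 0 < c * ε := ENNReal.mul_pos hc₀ (by exact_mod_cast hε.ne')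
    have hev : ∀ᶠ j in atTop, N ≤ j ∧ ∀ b ∈ B j, μ (((· * b) ⁻¹' E) ∆ E) ≤ c * ε :=
      (eventually_ge_atTop N).and (hB₁.eventually (eventually_smallSets_forall.2
        (ENNReal.tendsto_nhds_zero.1 (tendsto_measure_preimage_mul_right_symmDiff
          hE.nullMeasurableSet) _ hcε)))
    obtain ⟨j, hjN, hj⟩ := hev.exists
    have hBj : c * μ (B j) ≠ 0 := mul_ne_zero hc₀ (hB₀ j)
    have hBj' : c * μ (B j) ≠ ∞ := ENNReal.mul_ne_top hc (measure_ne_top μ _)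
    rw [zero_add, ← ENNReal.mul_le_mul_iff_right hBj hBj']
    calc c * μ (B j) * μ {h | h ∉ E ∧ ∀ j ≥ N, c * μ (B j) ≤ μ (h • B j ∩ E)}
        ≤ c * μ (B j) * μ {h | h ∉ E ∧ c * μ (B j) ≤ μ (h • B j ∩ E)} := by
          gcongr; exact fun hh => hh j hjN
      _ ≤ c * ε * μ (B j) := mul_measure_setOf_le_measure_smul_inter_le (hB j) hE
          fun b hb => (measure_mono (subset_union_left.trans_eq (symmDiff_def _ _).symm)).trans
            (hj b hb)
      _ = c * μ (B j) * ε := by ring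
  refine measure_mono_null (fun h hh => ?_) (measure_iUnion_null hT)
  obtain ⟨N, hN⟩ := eventually_atTop.1 hh.2
  exact mem_iUnion.2 ⟨N, hh.1, hN⟩

end Topological

theorem haar_smul_dense_subgroup_eq_general {H : Type*} [Group H] [TopologicalSpace H]
    [IsTopologicalGroup H] [CompactSpace H] [SecondCountableTopology H]
    [MeasurableSpace H] [BorelSpace H]
    (μ : Measure H) [μ.IsHaarMeasure]
    (L : Subgroup H)
    (Γ : Subgroup H) (hΓL : Γ ≤ L) (hΓdense : (L : Set H) ⊆ closure (Γ : Set H))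
    (D : Set H)
    (hbal : ∃ B : ℕ → Set H, (∀ j, IsClosed (B j)) ∧ Antitone B ∧ (⋂ j, B j = {1}) ∧
      (∀ j, 0 < μ (B j)) ∧
      ∀ s ∈ D, Tendsto (fun j => (μ (D ∩ s • B j)).toReal / (μ (B j)).toReal)
        atTop (nhds 1)) :
    μ ((Γ : Set H) * D) = μ ((L : Set H) * D) := by
  have := Measure.isMulRightInvariant_of_compactSpace μ
  obtain ⟨B, hBcl, hBanti, hBinter, hBpos, hBbal⟩ := hbal
  set E := toMeasurable μ ((Γ : Set H) * D)
  have hE : MeasurableSet E := measurableSet_toMeasurable _ _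
  have hdens : ((L : Set H) * D) \ E ⊆
      {h | h ∉ E ∧ ∀ᶠ j in atTop, 2⁻¹ * μ (B j) ≤ μ (h • B j ∩ E)} := by
    rintro _ ⟨⟨l, hl, s, hs, rfl⟩, hnot⟩
    refine ⟨hnot, ?_⟩
    filter_upwards [(hBbal s hs).eventually_mul_le_of_toReal_div (c := 2⁻¹) (by norm_num)]
      with j hj
    calc 2⁻¹ * μ (B j) ≤ μ (D ∩ s • B j) := hj
      _ ≤ μ (s • B j ∩ E) := measure_mono fun x hx =>
          ⟨hx.2, subset_toMeasurable _ _ (subset_mul_right D Γ.one_mem hx.1)⟩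
      _ = μ ((l * s) • B j ∩ E) := by
          rw [mul_smul, measure_smul_inter_of_preimage_ae_eq
            (preimage_mul_left_toMeasurable_ae_eq_of_mem_closure Γ D (hΓdense hl))]
  have hnull := measure_setOf_notMem_eventually_le_measure_smul_inter_eq_zero
    (fun j => (hBcl j).measurableSet) (fun j => (hBpos j).ne')
    (tendsto_smallSets_nhds_of_iInter_eq hBcl hBanti hBinter) hE (c := 2⁻¹) (by simp) (by simp)
  refine le_antisymm (measure_mono (mul_subset_mul_right hΓL)) ?_
  calc μ ((L : Set H) * D) ≤ μ E := measure_mono_ae (ae_le_set.2 (measure_mono_null hdens hnull))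
    _ = μ ((Γ : Set H) * D) := measure_toMeasurable _

/-- Let `H` be a compact second countable group, `L` a closed subgroup and `Γ ≤ L` a
dense subgroup of `L`. If `D ⊆ H` is a Borel set of positive Haar measure that is
balanced with respect to some Dirac sequence, then `m_H(ΓD) = m_H(LD)`. -/
theorem haar_smul_dense_subgroup_eq {H : Type*} [Group H] [TopologicalSpace H]
    [IsTopologicalGroup H] [CompactSpace H] [SecondCountableTopology H]
    [MeasurableSpace H] [BorelSpace H]
    (μ : Measure H) [μ.IsHaarMeasure] [IsProbabilityMeasure μ]
    (L : Subgroup H) (hL : IsClosed (L : Set H))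
    (Γ : Subgroup H) (hΓL : Γ ≤ L) (hΓdense : (L : Set H) ⊆ closure (Γ : Set H))
    (D : Set H) (hD : MeasurableSet D) (hDpos : 0 < μ D)
    (hbal : ∃ B : ℕ → Set H, (∀ j, IsClosed (B j)) ∧ Antitone B ∧ (⋂ j, B j = {1}) ∧
      (∀ j, 0 < μ (B j)) ∧
      ∀ s ∈ D, Tendsto (fun j => (μ (D ∩ s • B j)).toReal / (μ (B j)).toReal)
        atTop (nhds 1)) :
    μ ((Γ : Set H) * D) = μ ((L : Set H) * D) :=
  haar_smul_dense_subgroup_eq_general μ L Γ hΓL hΓdense D hbal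
end

section
/- Let (X, μ) be a probability measure-preserving action of a countable group G on a standard Borel probability space, and let F be a G-invariant sub-σ-algebra containing all G-invariant Borel sets. If C ⊂ X is a Borel set and J is an F-shadow of C (i.e., J is the positivity set of the conditional expectation E[χ_C | F]), then μ(GC) = μ(GJ), where GC = ∪_{g∈G} gC. -/
open MeasureTheory
open scoped Pointwise

/-- Let `(X, μ)` be a probability measure-preserving action of a countable group `G` on
a standard Borel probability space, and let `F` be a `G`-invariant sub-σ-algebra
containing all `G`-invariant Borel sets. If `C ⊆ X` is Borel and `J` is the `F`-shadow
of `C` (the positivity set of the conditional expectation `E[χ_C | F]`), then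
`μ(GC) = μ(GJ)`. -/
theorem measure_orbit_shadow {G X : Type*} [Group G] [Countable G]
    (F : MeasurableSpace X) [m0 : MeasurableSpace X] [StandardBorelSpace X] [MulAction G X]
    (hmeas : ∀ g : G, Measurable fun x : X => g • x)
    (μ : Measure X) [IsProbabilityMeasure μ]
    (hinv : ∀ g : G, Measure.map (fun x : X => g • x) μ = μ)
    (hFle : F ≤ m0)
    (hFinv : ∀ s : Set X, MeasurableSet[F] s →
      ∀ g : G, MeasurableSet[F] ((fun x : X => g • x) ⁻¹' s))
    (hFcontains : ∀ s : Set X, MeasurableSet[m0] s →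
      (∀ g : G, (fun x : X => g • x) ⁻¹' s = s) → MeasurableSet[F] s)
    (C : Set X) (hC : MeasurableSet C)
    (J : Set X) (hJ : J = {x : X | 0 < (μ[C.indicator (fun _ => (1 : ℝ))|F]) x}) :
    μ (⋃ g : G, (fun x : X => g • x) '' C) = μ (⋃ g : G, (fun x : X => g • x) '' J) := by
  letI : MeasurableSpace X := m0
  have hCm0 : MeasurableSet[m0] C := hC
  set f : X → ℝ := μ[C.indicator (fun _ => (1 : ℝ))|F] with hf
  have hInt : Integrable (C.indicator fun _ => (1 : ℝ)) μ := (integrable_const _).indicator hCm0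
  -- image as preimage
  have hGimg : ∀ (g : G) (s : Set X), (fun x : X => g • x) '' s = (fun x : X => g⁻¹ • x) ⁻¹' s :=
    fun g s => congrFun (Set.image_eq_preimage_of_inverse (fun x => inv_smul_smul g x)
      (fun x => smul_inv_smul g x)) s
  have hpres : ∀ g : G, MeasurePreserving (fun x : X => g • x) μ μ := fun g => ⟨hmeas g, hinv g⟩
  have hnull : ∀ (g : G) (N : Set X), μ N = 0 → μ ((fun x : X => g • x) '' N) = 0 := by
    intro g N hN
    rw [hGimg]
    exact (hpres g⁻¹).quasiMeasurePreserving.preimage_null hN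
  -- J is F-measurable
  have hmf : Measurable[F] f := stronglyMeasurable_condExp.measurable
  have hJF : MeasurableSet[F] J := by
    rw [hJ]; exact measurableSet_lt measurable_const hmf
  have hJm0 : MeasurableSet J := hFle J hJF
  -- f is a.e. nonneg
  have hfnn : 0 ≤ᵐ[μ] f :=
    condExp_nonneg (Filter.Eventually.of_forall
      (Set.indicator_nonneg (fun _ _ => zero_le_one)))
  -- Step 1 : μ (C \ J) = 0
  have hCJ : μ (C \ J) = 0 := by
    have h1 : ∫ x in Jᶜ, f x ∂μ = ∫ x in Jᶜ, C.indicator (fun _ => (1 : ℝ)) x ∂μ :=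
      setIntegral_condExp hFle hInt hJF.compl
    have h2 : ∫ x in Jᶜ, C.indicator (fun _ => (1 : ℝ)) x ∂μ = (μ (C ∩ Jᶜ)).toReal := by
      rw [setIntegral_indicator hCm0, setIntegral_const, smul_eq_mul, mul_one, Set.inter_comm]
      rfl
    have h3 : ∫ x in Jᶜ, f x ∂μ ≤ 0 := by
      apply setIntegral_nonpos hJm0.compl
      intro x hx
      have : ¬ (0 < f x) := by
        intro h; exact hx (by rw [hJ]; exact h)
      linarith
    have h4 : (μ (C ∩ Jᶜ)).toReal = 0 :=
      le_antisymm (by rw [← h2, ← h1]; exact h3) ENNReal.toReal_nonneg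
    have h5 : μ (C ∩ Jᶜ) = 0 := by
      rwa [ENNReal.toReal_eq_zero_iff, or_iff_left (measure_ne_top μ _)] at h4
    rwa [Set.diff_eq]
  -- GC
  set GC : Set X := ⋃ g : G, (fun x : X => g • x) '' C with hGC
  have hGCmeas : MeasurableSet GC := by
    apply MeasurableSet.iUnion
    intro g
    rw [hGimg]
    exact hmeas g⁻¹ hCm0
  have hGCinv : ∀ g : G, (fun x : X => g • x) ⁻¹' GC = GC := by
    intro g
    ext x
    simp only [hGC, Set.mem_preimage, Set.mem_iUnion, hGimg]
    constructor
    · rintro ⟨h, hx⟩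
      exact ⟨g⁻¹ * h, by simpa [mul_smul] using hx⟩
    · rintro ⟨h, hx⟩
      exact ⟨g * h, by simpa [mul_smul] using hx⟩
  have hGCF : MeasurableSet[F] GC := hFcontains GC hGCmeas hGCinv
  have hCsub : C ⊆ GC := by
    intro x hx
    exact Set.mem_iUnion.2 ⟨1, ⟨x, hx, one_smul G x⟩⟩
  -- Step 2 : μ (J \ GC) = 0
  have hJGC : μ (J \ GC) = 0 := by
    have h1 : ∫ x in GCᶜ, f x ∂μ = ∫ x in GCᶜ, C.indicator (fun _ => (1 : ℝ)) x ∂μ :=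
      setIntegral_condExp hFle hInt hGCF.compl
    have h2 : ∫ x in GCᶜ, C.indicator (fun _ => (1 : ℝ)) x ∂μ = 0 := by
      rw [setIntegral_indicator hCm0, setIntegral_const, smul_eq_mul, mul_one]
      have hemp : GCᶜ ∩ C = ∅ := by
        rw [Set.eq_empty_iff_forall_notMem]
        rintro x ⟨hxGC, hxC⟩
        exact hxGC (hCsub hxC)
      rw [hemp]
      simp
    have hae : f =ᵐ[μ.restrict GCᶜ] 0 := by
      rw [← setIntegral_eq_zero_iff_of_nonneg_ae (ae_restrict_of_ae hfnn)
        integrable_condExp.integrableOn]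
      rw [h1, h2]
    have hae' : μ.restrict GCᶜ {x | ¬ f x = 0} = 0 := ae_iff.mp hae
    have hsub : J ⊆ {x | ¬ f x = 0} := by
      intro x hx
      rw [hJ] at hx
      exact ne_of_gt hx
    have : μ.restrict GCᶜ J = 0 := measure_mono_null hsub hae'
    rwa [Measure.restrict_apply hJm0, ← Set.diff_eq] at this
  -- conclude
  apply le_antisymm
  · have hsub : GC ⊆ (⋃ g : G, (fun x : X => g • x) '' J) ∪ ⋃ g : G, (fun x : X => g • x) '' (C \ J) := by
      rintro x hx
      obtain ⟨g, c, hc, rfl⟩ := Set.mem_iUnion.1 hx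
      by_cases hcJ : c ∈ J
      · exact Or.inl (Set.mem_iUnion.2 ⟨g, c, hcJ, rfl⟩)
      · exact Or.inr (Set.mem_iUnion.2 ⟨g, c, ⟨hc, hcJ⟩, rfl⟩)
    calc μ GC ≤ μ ((⋃ g : G, (fun x : X => g • x) '' J) ∪ ⋃ g : G, (fun x : X => g • x) '' (C \ J)) :=
          measure_mono hsub
      _ ≤ μ (⋃ g : G, (fun x : X => g • x) '' J) + μ (⋃ g : G, (fun x : X => g • x) '' (C \ J)) :=
          measure_union_le _ _
      _ = μ (⋃ g : G, (fun x : X => g • x) '' J) := by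
          rw [measure_iUnion_null fun g => hnull g _ hCJ, add_zero]
  · have hsub : (⋃ g : G, (fun x : X => g • x) '' J) ⊆ GC ∪ ⋃ g : G, (fun x : X => g • x) '' (J \ GC) := by
      rintro x hx
      obtain ⟨g, j, hj, rfl⟩ := Set.mem_iUnion.1 hx
      by_cases hjGC : j ∈ GC
      · left
        have : g • j ∈ (fun x : X => g • x) '' GC := ⟨j, hjGC, rfl⟩
        rwa [hGimg, hGCinv g⁻¹] at this
      · exact Or.inr (Set.mem_iUnion.2 ⟨g, j, ⟨hj, hjGC⟩, rfl⟩)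
    calc μ (⋃ g : G, (fun x : X => g • x) '' J)
        ≤ μ (GC ∪ ⋃ g : G, (fun x : X => g • x) '' (J \ GC)) := measure_mono hsub
      _ ≤ μ GC + μ (⋃ g : G, (fun x : X => g • x) '' (J \ GC)) := measure_union_le _ _
      _ = μ GC := by rw [measure_iUnion_null fun g => hnull g _ hJGC, add_zero]
end

section
/- Let G be a countable group acting on a compact metrizable space X with ergodic invariant Borel probability measure μ, and let (Y, ν) be a measure-preserving Borel G-space. For Borel sets A ⊂ X and C ⊂ Y, the function x ↦ ν(A_x⁻¹C) is μ-almost everywhere equal to the constant (μ ⊗ ν)(G·(A × C)), where G acts diagonally on X × Y. -/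
open MeasureTheory
open scoped Pointwise

/-!
The saturation `F = G • (A ×ˢ C)` is a `G`-invariant measurable subset of `X × Y` whose slice
over `x` is `A_x⁻¹ C`, and the slice over `g • x` is the `g`-translate of the slice over `x`.
Hence `x ↦ ν (F_x)` is `G`-invariant, so a.e. constant by ergodicity, and by Tonelli the constant
is `∫⁻ x, ν (F_x) ∂μ = (μ.prod ν) F`.
-/

theorem exists_ae_eq_const_of_invariant {G X β : Type*} [SMul G X] [MeasurableSpace X]
    {μ : Measure X} [IsProbabilityMeasure μ] [Nonempty β] [MeasurableSpace β]
    [MeasurableSpace.CountablySeparated β]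
    (herg : ∀ s : Set X, MeasurableSet s → (∀ g : G, (g • ·) ⁻¹' s = s) → μ s = 0 ∨ μ s = 1)
    {f : X → β} (hf : Measurable f) (hinv : ∀ (g : G) (x : X), f (g • x) = f x) :
    ∃ c, f =ᵐ[μ] Function.const X c := by
  refine Filter.exists_eventuallyEq_const_of_forall_separating MeasurableSet fun U hU => ?_
  have hfU : MeasurableSet (f ⁻¹' U) := hf hU
  refine (herg _ hfU fun g => by ext x; simp [hinv]).symm.imp (fun h => ?_) (fun h => ?_)
  · exact (mem_ae_iff_prob_eq_one hfU).2 h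
  · exact measure_eq_zero_iff_ae_notMem.1 h

namespace Set

variable {G X Y : Type*} [Group G] [MulAction G X] [MulAction G Y]

theorem smul_iUnion_smul (g : G) (S : Set X) : g • ⋃ h : G, h • S = ⋃ h : G, h • S := by
  simp only [smul_set_iUnion, smul_smul]
  exact (Equiv.mulLeft g).surjective.iUnion_comp (· • S)

theorem preimage_prodMk_smul_smul (g : G) (x : X) (T : Set (X × Y)) :
    Prod.mk (g • x) ⁻¹' (g • T) = g • (Prod.mk x ⁻¹' T) := by
  ext y
  simp [mem_smul_set_iff_inv_smul_mem]

theorem preimage_prodMk_iUnion_smul_prod (x : X) (A : Set X) (C : Set Y) :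
    Prod.mk x ⁻¹' (⋃ g : G, g • (A ×ˢ C)) = ⋃ g ∈ {g : G | g • x ∈ A}, g⁻¹ • C := by
  ext y
  simp only [smul_set_prod, mem_preimage, mem_iUnion, mem_prod, mem_ofPred_eq, exists_prop]
  refine (Equiv.inv G).exists_congr fun g => ?_
  simp [mem_smul_set_iff_inv_smul_mem]

end Set

theorem nu_actionSet_ae_const_general {G X Y : Type*} [Group G] [Countable G]
    [TopologicalSpace X]
    [MeasurableSpace X] [BorelSpace X] [MulAction G X]
    (hcont : ∀ g : G, Continuous fun x : X => g • x)
    (μ : Measure X) [IsProbabilityMeasure μ]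
    (hμerg : ∀ s : Set X, MeasurableSet s →
      (∀ g : G, (fun x : X => g • x) ⁻¹' s = s) → μ s = 0 ∨ μ s = 1)
    [MeasurableSpace Y] [MulAction G Y]
    (hmeasY : ∀ g : G, Measurable fun y : Y => g • y)
    (ν : Measure Y) [IsProbabilityMeasure ν]
    (hν : ∀ g : G, Measure.map (fun y : Y => g • y) ν = ν)
    (A : Set X) (hA : MeasurableSet A) (C : Set Y) (hC : MeasurableSet C) :
    ∀ᵐ x ∂μ, ν (⋃ g ∈ {g : G | g • x ∈ A}, g⁻¹ • C) =
      (μ.prod ν) (⋃ g : G, (fun p : X × Y => (g • p.1, g • p.2)) '' (A ×ˢ C)) := by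
  have : MeasurableConstSMul G X := ⟨fun g => (hcont g).measurable⟩
  have : MeasurableConstSMul G Y := ⟨hmeasY⟩
  have : SMulInvariantMeasure G Y ν := ((smulInvariantMeasure_tfae G ν).out 5 0).1 hν
  -- the diagonal action is the action on `X × Y` already present in Mathlib
  change ∀ᵐ x ∂μ, _ = (μ.prod ν) (⋃ g : G, g • (A ×ˢ C))
  have hF : MeasurableSet (⋃ g : G, g • (A ×ˢ C)) := .iUnion fun g => by
    rw [Set.smul_set_prod]
    exact (hA.const_smul g).prod (hC.const_smul g)
  have hslice (g : G) (x : X) :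
      Prod.mk (g • x) ⁻¹' (⋃ h : G, h • (A ×ˢ C)) = g • (Prod.mk x ⁻¹' ⋃ h : G, h • (A ×ˢ C)) := by
    rw [← Set.preimage_prodMk_smul_smul, Set.smul_iUnion_smul]
  obtain ⟨c, hc⟩ := exists_ae_eq_const_of_invariant hμerg
    (measurable_measure_prodMk_left (ν := ν) hF) fun g x => by rw [hslice, measure_smul]
  have hprod : (μ.prod ν) (⋃ g : G, g • (A ×ˢ C)) = c := by
    rw [Measure.prod_apply hF, lintegral_congr_ae hc]
    simp
  filter_upwards [hc] with x hx
  rw [Set.preimage_prodMk_iUnion_smul_prod] at hx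
  rwa [hprod]

/-- Let `G` be a countable group acting on a compact metrizable space `X` with an
ergodic invariant Borel probability measure `μ`, and let `(Y, ν)` be a
measure-preserving Borel `G`-space. For Borel sets `A ⊆ X` and `C ⊆ Y`, the function
`x ↦ ν(A_x⁻¹C)` is `μ`-a.e. equal to the constant `(μ ⊗ ν)(G·(A × C))`, where `G` acts
diagonally on `X × Y`. -/
theorem nu_actionSet_ae_const {G X Y : Type*} [Group G] [Countable G]
    [TopologicalSpace X] [CompactSpace X] [TopologicalSpace.MetrizableSpace X]
    [MeasurableSpace X] [BorelSpace X] [MulAction G X]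
    (hcont : ∀ g : G, Continuous fun x : X => g • x)
    (μ : Measure X) [IsProbabilityMeasure μ]
    (hμinv : ∀ g : G, Measure.map (fun x : X => g • x) μ = μ)
    (hμerg : ∀ s : Set X, MeasurableSet s →
      (∀ g : G, (fun x : X => g • x) ⁻¹' s = s) → μ s = 0 ∨ μ s = 1)
    [MeasurableSpace Y] [MulAction G Y]
    (hmeasY : ∀ g : G, Measurable fun y : Y => g • y)
    (ν : Measure Y) [IsProbabilityMeasure ν]
    (hν : ∀ g : G, Measure.map (fun y : Y => g • y) ν = ν)
    (A : Set X) (hA : MeasurableSet A) (C : Set Y) (hC : MeasurableSet C) :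
    ∀ᵐ x ∂μ, ν (⋃ g ∈ {g : G | g • x ∈ A}, g⁻¹ • C) =
      (μ.prod ν) (⋃ g : G, (fun p : X × Y => (g • p.1, g • p.2)) '' (A ×ˢ C)) :=
  nu_actionSet_ae_const_general hcont μ hμerg hmeasY ν hν A hA C hC
end

section
/- Let G be a countable group which is the semidirect product of an abelian normal subgroup N and an abelian subgroup L (so G = NL, N ∩ L = {e}), and suppose Λ is a proper finitely generated subgroup of N such that the triple (G, Λ, N) is contracting. Then the set S = LΛ is thick in G, i.e., for every finite F ⊂ G there exists g ∈ G with Fg⁻¹ ⊂ S, while the difference set S⁻¹S is not syndetic. -/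
/-!
Write `g = m l` with `m ∈ N`, `l ∈ L`. Since `N` is abelian, conjugation by `g` agrees with
conjugation by `l` on `N`, so a contracting element can be taken in `L`. Given a finite `F`, write
`f = n_f l_f` and choose `l₀ ∈ L` pushing every `l_f⁻¹ n_f l_f` into `Λ`; then
`f l₀⁻¹ = (l_f l₀⁻¹) (l₀ l_f⁻¹ n_f l_f l₀⁻¹) ∈ LΛ`, which gives thickness.

On the other hand `S⁻¹S = ΛLΛ`, and an element of `N` lying in `f ΛLΛ` with `f = n l` lies in
`n (lΛl⁻¹) Λ`, because `N ∩ L` is trivial. If finitely many translates of `S⁻¹S` covered `G`,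
then `N` would be finitely generated; contracting the whole of `N` into `Λ` contradicts `Λ ≠ N`.
-/

open scoped Pointwise

theorem Subgroup.FG.map {G G' : Type*} [Group G] [Group G'] {H : Subgroup G} (hH : H.FG)
    (f : G →* G') : (H.map f).FG := by
  classical
  obtain ⟨s, rfl⟩ := hH
  exact ⟨s.image f, by rw [MonoidHom.map_closure, Finset.coe_image]⟩

section

variable {G : Type*} [Group G]

def IsThick (S : Set G) : Prop :=
  ∀ F : Finset G, ∃ g : G, ∀ f ∈ F, f * g⁻¹ ∈ S

def IsSyndetic (S : Set G) : Prop :=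
  ∃ F : Finset G, ∀ g : G, ∃ f ∈ F, ∃ s ∈ S, g = f * s

def Subgroup.IsContracting (Λ N : Subgroup G) : Prop :=
  ∀ F : Finset G, (↑F : Set G) ⊆ (N : Set G) → ∃ g : G, ∀ f ∈ F, g * f * g⁻¹ ∈ Λ

namespace Subgroup

variable {Λ N L : Subgroup G}

theorem IsContracting.exists_map_conj_le (h : IsContracting Λ N) {H : Subgroup G} (hHN : H ≤ N)
    (hH : H.FG) : ∃ g : G, H.map (MulAut.conj g).toMonoidHom ≤ Λ := by
  obtain ⟨T, rfl⟩ := hH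
  obtain ⟨g, hg⟩ := h T (subset_closure.trans hHN)
  refine ⟨g, ?_⟩
  rw [MonoidHom.map_closure, closure_le]
  rintro _ ⟨t, ht, rfl⟩
  exact hg t ht

theorem IsContracting.le_of_fg [N.Normal] (h : IsContracting Λ N) (hN : N.FG) : N ≤ Λ := by
  obtain ⟨g, hg⟩ := h.exists_map_conj_le le_rfl hN
  rwa [MulEquiv.toMonoidHom_eq_coe, Normal.map_conj_eq N g] at hg

theorem mul_conj_eq_conj_of_mem [N.Normal] (hNab : ∀ a ∈ N, ∀ b ∈ N, a * b = b * a)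
    {m x : G} (hm : m ∈ N) (hx : x ∈ N) (l : G) : m * l * x * (m * l)⁻¹ = l * x * l⁻¹ := by
  have hcomm := hNab m hm _ (Normal.conj_mem ‹_› x hx l)
  calc m * l * x * (m * l)⁻¹ = m * (l * x * l⁻¹) * m⁻¹ := by group
    _ = l * x * l⁻¹ := by rw [hcomm]; group

theorem IsContracting.exists_mem_conj_mem [N.Normal] (h : IsContracting Λ N)
    (hNab : ∀ a ∈ N, ∀ b ∈ N, a * b = b * a) (hprod : ∀ g : G, ∃ n ∈ N, ∃ l ∈ L, g = n * l)
    (F : Finset G) (hF : (↑F : Set G) ⊆ (N : Set G)) :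
    ∃ l ∈ L, ∀ f ∈ F, l * f * l⁻¹ ∈ Λ := by
  obtain ⟨g, hg⟩ := h F hF
  obtain ⟨m, hm, l, hl, rfl⟩ := hprod g
  exact ⟨l, hl, fun f hf => mul_conj_eq_conj_of_mem hNab hm (hF hf) l ▸ hg f hf⟩

theorem eq_one_of_mul_mem (hNL : N ⊓ L = ⊥) {n l : G} (hn : n ∈ N) (hl : l ∈ L)
    (h : n * l ∈ N) : l = 1 := by
  have hlN : l ∈ N := by simpa using mul_mem (inv_mem hn) h
  have hlNL : l ∈ N ⊓ L := ⟨hlN, hl⟩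
  rwa [hNL, mem_bot] at hlNL

theorem mul_mul_mul_eq_of_mem [N.Normal] (hNL : N ⊓ L = ⊥) {n l a l' b : G} (hn : n ∈ N)
    (hl : l ∈ L) (ha : a ∈ N) (hl' : l' ∈ L) (hb : b ∈ N) (h : n * l * (a * l' * b) ∈ N) :
    n * l * (a * l' * b) = n * (l * a * l⁻¹) * b := by
  have hsplit : n * l * (a * l' * b) =
      n * (l * a * l⁻¹) * (l * l' * b * (l * l')⁻¹) * (l * l') := by group
  have hN : n * (l * a * l⁻¹) * (l * l' * b * (l * l')⁻¹) ∈ N :=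
    mul_mem (mul_mem hn (Normal.conj_mem ‹_› a ha l)) (Normal.conj_mem ‹_› b hb _)
  have hll' : l * l' = 1 := eq_one_of_mul_mem hNL hN (mul_mem hl hl') (hsplit ▸ h)
  rw [hsplit, hll']
  group

end Subgroup

open Subgroup

theorem coe_mul_coe_inv_mul_self (L Λ : Subgroup G) :
    ((L : Set G) * Λ)⁻¹ * ((L : Set G) * Λ) = (Λ : Set G) * L * Λ := by
  rw [mul_inv_rev, inv_coe_set, inv_coe_set, mul_assoc, ← mul_assoc (L : Set G),
    ← L.coe_toSubmonoid, Submonoid.coe_mul_self_eq, mul_assoc]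

variable {Λ N L : Subgroup G}

theorem isThick_coe_mul_coe [N.Normal] (hNab : ∀ a ∈ N, ∀ b ∈ N, a * b = b * a)
    (hprod : ∀ g : G, ∃ n ∈ N, ∃ l ∈ L, g = n * l) (h : IsContracting Λ N) :
    IsThick ((L : Set G) * (Λ : Set G)) := by
  classical
  intro F
  choose n hn l hl heq using id hprod
  have hF'N : ↑(F.image fun f => (l f)⁻¹ * n f * l f) ⊆ (N : Set G) := by
    simp only [Finset.coe_image, Set.image_subset_iff]
    intro f _
    simpa using Normal.conj_mem ‹_› _ (hn f) (l f)⁻¹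
  obtain ⟨l₀, hl₀, hconj⟩ := h.exists_mem_conj_mem hNab hprod _ hF'N
  refine ⟨l₀, fun f hf => ?_⟩
  have hf' : f * l₀⁻¹ = (l f * l₀⁻¹) * (l₀ * ((l f)⁻¹ * n f * l f) * l₀⁻¹) := by
    conv_lhs => rw [heq f]
    group
  rw [hf']
  exact Set.mul_mem_mul (mul_mem (hl f) (inv_mem hl₀)) (hconj _ (Finset.mem_image_of_mem _ hf))

theorem fg_of_isSyndetic_inv_mul [N.Normal] (hNL : N ⊓ L = ⊥)
    (hprod : ∀ g : G, ∃ n ∈ N, ∃ l ∈ L, g = n * l) (hΛN : Λ ≤ N) (hΛ : Λ.FG)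
    (hS : IsSyndetic (((L : Set G) * (Λ : Set G))⁻¹ * ((L : Set G) * (Λ : Set G)))) : N.FG := by
  classical
  obtain ⟨F, hF⟩ := hS
  choose n hn l hl heq using id hprod
  set K : Subgroup G :=
    closure (F.image n) ⊔ (⨆ f ∈ F, Λ.map (MulAut.conj (l f)).toMonoidHom) ⊔ Λ
  have hK : K.FG :=
    FG.sup (FG.sup ⟨F.image n, rfl⟩ (FG.biSup_finset F _ fun f _ => hΛ.map _)) hΛ
  have hKN : K ≤ N := by
    refine sup_le (sup_le ?_ (iSup₂_le fun f _ => ?_)) hΛN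
    · simpa [closure_le, Set.subset_def] using fun f _ => hn f
    · simpa using (map_mono hΛN).trans (Normal.map_conj_eq N (l f)).le
  have hNK : N ≤ K := by
    intro x hx
    obtain ⟨f, hf, s, hs, rfl⟩ := hF x
    rw [coe_mul_coe_inv_mul_self] at hs
    obtain ⟨_, ⟨a, ha, l', hl', rfl⟩, b, hb, rfl⟩ := hs
    rw [heq f] at hx ⊢
    rw [mul_mul_mul_eq_of_mem hNL (hn f) (hl f) (hΛN ha) hl' (hΛN hb) hx]
    refine mul_mem (mul_mem ?_ ?_) (mem_sup_right hb)
    · exact mem_sup_left (mem_sup_left (subset_closure (Finset.mem_image_of_mem n hf)))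
    · exact mem_sup_left (mem_sup_right (mem_iSup_of_mem f (mem_iSup_of_mem hf ⟨a, ha, rfl⟩)))
  exact le_antisymm hKN hNK ▸ hK

end

theorem thick_LLambda_and_not_syndetic_general {G : Type*} [Group G]
    (N L : Subgroup G) [N.Normal]
    (hNab : ∀ a ∈ N, ∀ b ∈ N, a * b = b * a)
    (hNL : N ⊓ L = ⊥)
    (hprod : ∀ g : G, ∃ n ∈ N, ∃ l ∈ L, g = n * l)
    (Λ : Subgroup G) (hΛN : Λ ≤ N) (hΛproper : Λ ≠ N) (hΛfg : Λ.FG)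
    (hcontr : ∀ F : Finset G, (↑F : Set G) ⊆ (N : Set G) →
      ∃ g : G, ∀ f ∈ F, g * f * g⁻¹ ∈ Λ) :
    (∀ F : Finset G, ∃ g : G, ∀ f ∈ F, f * g⁻¹ ∈ (L : Set G) * (Λ : Set G)) ∧
    ¬ ∃ F : Finset G, ∀ g : G, ∃ f ∈ F,
        ∃ s ∈ ((L : Set G) * (Λ : Set G))⁻¹ * ((L : Set G) * (Λ : Set G)),
          g = f * s := by
  have hcontr : Λ.IsContracting N := hcontr
  refine ⟨isThick_coe_mul_coe hNab hprod hcontr, fun hS => hΛproper ?_⟩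
  exact le_antisymm hΛN (hcontr.le_of_fg (fg_of_isSyndetic_inv_mul hNL hprod hΛN hΛfg hS))

/-- Let `G = N ⋊ L` be a countable group with `N` abelian normal, `L` abelian,
`N ∩ L = {e}`, `NL = G`, and let `Λ` be a proper finitely generated subgroup of `N`
such that the triple `(G, Λ, N)` is contracting. Then `S = LΛ` is thick
(every finite set `F` satisfies `Fg⁻¹ ⊆ S` for some `g`), while `S⁻¹S` is not
syndetic. -/
theorem thick_LLambda_and_not_syndetic {G : Type*} [Group G] [Countable G]
    (N L : Subgroup G) [N.Normal]
    (hNab : ∀ a ∈ N, ∀ b ∈ N, a * b = b * a)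
    (hLab : ∀ a ∈ L, ∀ b ∈ L, a * b = b * a)
    (hNL : N ⊓ L = ⊥)
    (hprod : ∀ g : G, ∃ n ∈ N, ∃ l ∈ L, g = n * l)
    (Λ : Subgroup G) (hΛN : Λ ≤ N) (hΛproper : Λ ≠ N) (hΛfg : Λ.FG)
    (hcontr : ∀ F : Finset G, (↑F : Set G) ⊆ (N : Set G) →
      ∃ g : G, ∀ f ∈ F, g * f * g⁻¹ ∈ Λ) :
    (∀ F : Finset G, ∃ g : G, ∀ f ∈ F, f * g⁻¹ ∈ (L : Set G) * (Λ : Set G)) ∧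
    ¬ ∃ F : Finset G, ∀ g : G, ∃ f ∈ F,
        ∃ s ∈ ((L : Set G) * (Λ : Set G))⁻¹ * ((L : Set G) * (Λ : Set G)),
          g = f * s :=
  thick_LLambda_and_not_syndetic_general N L hNab hNL hprod Λ hΛN hΛproper hΛfg hcontr
end
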